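/- arXiv:1904.02897 — 9 statements merged into one kernel-verified Lean document; each statement's English description precedes it below -/
import Mathlib

section
/- Every ω-monoid is either a tempered monoid or a positive scalar multiple of a numerical semigroup. Precisely: let Ω ⊆ ℝ be closed under addition and be the range of a strictly increasing sequence a : ℕ → ℝ with a(0) = 0. Then either a(n+1) − a(n) → 0 as n → ∞, or there exist a real number λ > 0 and a numerical semigroup S such that Ω = {λ·s : s ∈ S}. -/
/-!
The subgroup of `ℝ` generated by `Ω` consists of the differences `u - v` of elements of `Ω`,
and is either dense or cyclic. If `Ω` contains `y ≥ 0` and `y + d` with `d > 0`, it contains the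
progressions `k * y + i * d` (`i ≤ k`) of step `d`, which overlap for large `k`; hence every
interval `(t, t + d]` with `t` large meets `Ω`. In the dense case `d` can be taken arbitrarily
small, which forces the gaps to tend to `0`. In the cyclic case, generated by `l > 0`, `Ω` is `l`
times a submonoid `S` of `ℕ`, and taking `d = l` shows that `S` contains all large integers.
-/

open Filter Topology Set

section FloorField

variable {K : Type*} [Field K] [LinearOrder K] [IsStrictOrderedRing K] [FloorSemiring K]

lemma exists_nat_mul_mem_Ioc {x d : K} (hx : 0 ≤ x) (hd : 0 < d) :
    ∃ i : ℕ, (i : K) * d ∈ Ioc x (x + d) := by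
  refine ⟨⌊x / d⌋₊ + 1, ?_, ?_⟩
  · have := Nat.lt_floor_add_one (x / d)
    push_cast
    rwa [div_lt_iff₀ hd] at this
  · have := Nat.floor_le (div_nonneg hx hd.le)
    push_cast
    rw [le_div_iff₀ hd] at this
    linarith

lemma AddSubmonoid.mem_closure_iff_exists_sub {G : Type*} [AddCommGroup G] (M : AddSubmonoid G)
    {x : G} : x ∈ AddSubgroup.closure (M : Set G) ↔ ∃ u ∈ M, ∃ v ∈ M, u - v = x := by
  refine ⟨fun hx => ?_, ?_⟩
  · induction hx using AddSubgroup.closure_induction with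
    | mem x hx => exact ⟨x, hx, 0, M.zero_mem, sub_zero x⟩
    | zero => exact ⟨0, M.zero_mem, 0, M.zero_mem, sub_zero 0⟩
    | add _ _ _ _ hx hy =>
      obtain ⟨u, hu, v, hv, rfl⟩ := hx
      obtain ⟨u', hu', v', hv', rfl⟩ := hy
      exact ⟨u + u', M.add_mem hu hu', v + v', M.add_mem hv hv', by abel⟩
    | neg _ _ hx =>
      obtain ⟨u, hu, v, hv, rfl⟩ := hx
      exact ⟨v, hv, u, hu, (neg_sub u v).symm⟩
  · rintro ⟨u, hu, v, hv, rfl⟩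
    exact sub_mem (AddSubgroup.subset_closure hu) (AddSubgroup.subset_closure hv)

lemma AddSubmonoid.eventually_exists_mem_Ioc (M : AddSubmonoid K) {y d : K} (hy₀ : 0 ≤ y)
    (hd : 0 < d) (hy : y ∈ M) (hyd : y + d ∈ M) :
    ∀ᶠ t in atTop, ∃ s ∈ M, s ∈ Ioc t (t + d) := by
  filter_upwards [eventually_ge_atTop ((y + d) ^ 2 / d)] with t ht
  have hyd₀ : 0 < y + d := by linarith
  have ht₀ : 0 ≤ t := le_trans (by positivity) ht
  obtain ⟨k, hk_lt, hk_le⟩ := exists_nat_mul_mem_Ioc ht₀ hyd₀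
  have hkd : y + d ≤ k * d := by
    rw [div_le_iff₀ hd] at ht
    nlinarith
  have hky : (k : K) * y ≤ t := by nlinarith
  obtain ⟨i, hi_lt, hi_le⟩ := exists_nat_mul_mem_Ioc (sub_nonneg.2 hky) hd
  have hik : i ≤ k := by
    have : (i : K) < k + 1 := by nlinarith
    exact Nat.lt_succ_iff.1 (by exact_mod_cast this)
  refine ⟨(k - i) • y + i • (y + d), M.add_mem (M.nsmul_mem hy _) (M.nsmul_mem hyd _), ?_⟩
  have hs : (k - i) • y + i • (y + d) = (k : K) * y + i * d := by
    simp only [nsmul_eq_mul, Nat.cast_sub hik]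
    ring
  rw [hs]
  constructor <;> linarith

end FloorField

lemma tendsto_succ_sub_nhds_zero_of_eventually_exists_mem_Ioo {a : ℕ → ℝ} (ha : StrictMono a)
    (ha_top : Tendsto a atTop atTop)
    (h : ∀ ε > 0, ∀ᶠ t in atTop, ∃ m, a m ∈ Ioo t (t + ε)) :
    Tendsto (fun n => a (n + 1) - a n) atTop (𝓝 0) := by
  refine tendsto_order.2 ⟨fun b hb => Eventually.of_forall fun n => ?_, fun ε hε => ?_⟩
  · exact hb.trans (sub_pos.2 (ha n.lt_succ_self))
  · filter_upwards [ha_top.eventually (h ε hε)] with n ⟨m, hnm, hm⟩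
    have : a (n + 1) ≤ a m := ha.monotone (ha.lt_iff_lt.1 hnm)
    linarith

lemma exists_nat_mul_abs_eq_of_mem_zmultiples {R : Type*} [Ring R] [LinearOrder R]
    [IsStrictOrderedRing R] {g z : R} (hz : z ∈ AddSubgroup.zmultiples g)
    (hz₀ : 0 ≤ z) : ∃ k : ℕ, k * |g| = z := by
  obtain ⟨n, rfl⟩ := AddSubgroup.mem_zmultiples_iff.1 hz
  refine ⟨n.natAbs, ?_⟩
  rw [← abs_of_nonneg hz₀, zsmul_eq_mul, abs_mul, Nat.cast_natAbs, Int.cast_abs]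

lemma finite_compl_of_eventually_exists_mul_mem_Ioc {S : Set ℕ} {l : ℝ} (hl : 0 < l)
    (h : ∀ᶠ t in atTop, ∃ s ∈ S, l * s ∈ Ioc t (t + l)) : Sᶜ.Finite := by
  have hlim : Tendsto (fun n : ℕ => l * ((n : ℝ) - 1)) atTop atTop :=
    (tendsto_atTop_add_const_right _ _ tendsto_natCast_atTop_atTop).const_mul_atTop hl
  refine (eventually_cofinite.1 ?_ : {n | n ∉ S}.Finite)
  rw [Nat.cofinite_eq_atTop]
  filter_upwards [hlim.eventually h] with n ⟨s, hs, hs_lt, hs_le⟩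
  have hsn : (s : ℝ) ≤ n := by nlinarith
  have hns : (n : ℝ) < s + 1 := by nlinarith
  have : s = n := le_antisymm (by exact_mod_cast hsn) (Nat.lt_succ_iff.1 (by exact_mod_cast hns))
  exact this ▸ hs

lemma AddSubmonoid.eventually_exists_mem_Ioc_of_mem_closure (M : AddSubmonoid ℝ)
    (hM : ∀ x ∈ M, 0 ≤ x) {d : ℝ} (hd : d ∈ AddSubgroup.closure (M : Set ℝ)) (hd₀ : 0 < d) :
    ∀ᶠ t in atTop, ∃ s ∈ M, s ∈ Ioc t (t + d) := by
  obtain ⟨u, hu, v, hv, rfl⟩ := M.mem_closure_iff_exists_sub.1 hd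
  exact M.eventually_exists_mem_Ioc (hM v hv) hd₀ hv (by rwa [add_sub_cancel])

lemma AddSubmonoid.coe_eq_image_natCast_mul (M : AddSubmonoid ℝ) (hM : ∀ x ∈ M, 0 ≤ x) {g : ℝ}
    (hg : (M : Set ℝ) ⊆ AddSubgroup.zmultiples g) :
    (M : Set ℝ) = (fun s : ℕ => |g| * s) '' {s | |g| * s ∈ M} := by
  refine Subset.antisymm (fun z hz => ?_) (image_subset_iff.2 fun _ hs => hs)
  obtain ⟨k, rfl⟩ := exists_nat_mul_abs_eq_of_mem_zmultiples (hg hz) (hM z hz)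
  exact ⟨k, by rwa [mul_comm] at hz, mul_comm _ _⟩

lemma AddSubmonoid.tendsto_succ_sub_nhds_zero_of_dense (M : AddSubmonoid ℝ)
    (hM : ∀ x ∈ M, 0 ≤ x) (hdense : Dense (AddSubgroup.closure (M : Set ℝ) : Set ℝ))
    {a : ℕ → ℝ} (ha : StrictMono a) (hrange : range a = M) :
    Tendsto (fun n => a (n + 1) - a n) atTop (𝓝 0) := by
  have hmem {x : ℝ} : x ∈ M ↔ x ∈ range a := by rw [hrange, SetLike.mem_coe]
  have ha₁ : 0 < a 1 := (hM _ (hmem.2 (mem_range_self 0))).trans_lt (ha Nat.zero_lt_one)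
  have ha_top : Tendsto a atTop atTop := tendsto_atTop_atTop_of_monotone ha.monotone fun b => by
    obtain ⟨k, hk⟩ := Archimedean.arch b ha₁
    obtain ⟨m, hm⟩ := hmem.1 (M.nsmul_mem (hmem.2 (mem_range_self 1)) k)
    exact ⟨m, hm ▸ hk⟩
  refine tendsto_succ_sub_nhds_zero_of_eventually_exists_mem_Ioo ha ha_top fun ε hε => ?_
  obtain ⟨d, hd, hd₀, hdε⟩ := hdense.exists_between hε
  filter_upwards [M.eventually_exists_mem_Ioc_of_mem_closure hM hd hd₀] with t ⟨s, hs, hts⟩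
  obtain ⟨m, rfl⟩ := hmem.1 hs
  exact ⟨m, hts.1, by linarith [hts.2]⟩

lemma AddSubmonoid.exists_finite_compl_coe_eq_image_mul_of_closure_eq (M : AddSubmonoid ℝ)
    (hM : ∀ x ∈ M, 0 ≤ x) {x : ℝ} (hx : x ∈ M) (hx₀ : x ≠ 0) {g : ℝ}
    (hg : AddSubgroup.closure (M : Set ℝ) = AddSubgroup.closure {g}) :
    ∃ l : ℝ, 0 < l ∧ ∃ S : AddSubmonoid ℕ,
      (S : Set ℕ)ᶜ.Finite ∧ (M : Set ℝ) = (fun s : ℕ => l * s) '' S := by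
  have hMg : (M : Set ℝ) ⊆ AddSubgroup.zmultiples g :=
    AddSubgroup.zmultiples_eq_closure g ▸ hg ▸ AddSubgroup.subset_closure
  have hl : 0 < |g| := abs_pos.2 fun hg₀ => hx₀ (by simpa [hg₀] using hMg hx)
  let S := M.comap ((AddMonoidHom.mulLeft |g|).comp (Nat.castAddMonoidHom ℝ))
  have hMS : (M : Set ℝ) = (fun s : ℕ => |g| * s) '' S := M.coe_eq_image_natCast_mul hM hMg
  have hgM : |g| ∈ AddSubgroup.closure (M : Set ℝ) :=
    abs_mem_iff.2 (hg ▸ AddSubgroup.subset_closure rfl)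
  refine ⟨|g|, hl, S, finite_compl_of_eventually_exists_mul_mem_Ioc hl ?_, hMS⟩
  filter_upwards [M.eventually_exists_mem_Ioc_of_mem_closure hM hgM hl] with t ⟨z, hz, hzt⟩
  obtain ⟨s, hs, rfl⟩ := hMS ▸ SetLike.mem_coe.2 hz
  exact ⟨s, hs, hzt⟩

/-- Every ω-monoid is either a tempered monoid or a positive scalar multiple of a
numerical semigroup. -/
theorem omega_monoid_tempered_or_scaled_numerical_semigroup
    (Ω : Set ℝ) (a : ℕ → ℝ)
    (hadd : ∀ x ∈ Ω, ∀ y ∈ Ω, x + y ∈ Ω)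
    (hmono : StrictMono a) (h0 : a 0 = 0) (hrange : Set.range a = Ω) :
    Tendsto (fun n => a (n + 1) - a n) atTop (𝓝 0) ∨
      ∃ l : ℝ, 0 < l ∧ ∃ S : Set ℕ,
        (0 ∈ S ∧ (∀ x ∈ S, ∀ y ∈ S, x + y ∈ S) ∧ Sᶜ.Finite) ∧
        Ω = (fun s : ℕ => l * (s : ℝ)) '' S := by
  subst hrange
  let M : AddSubmonoid ℝ :=
    { carrier := range a, add_mem' := fun hx hy => hadd _ hx _ hy, zero_mem' := ⟨0, h0⟩ }
  have hM : ∀ x ∈ M, 0 ≤ x := by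
    rintro _ ⟨n, rfl⟩
    exact h0 ▸ hmono.monotone n.zero_le
  rcases (AddSubgroup.closure (M : Set ℝ)).dense_or_cyclic with hdense | ⟨g, hg⟩
  · exact .inl (M.tendsto_succ_sub_nhds_zero_of_dense hM hdense hmono rfl)
  · obtain ⟨l, hl, S, hS, hMS⟩ := M.exists_finite_compl_coe_eq_image_mul_of_closure_eq hM
      (mem_range_self 1) (h0 ▸ (hmono Nat.zero_lt_one).ne') hg
    exact .inr ⟨l, hl, S, ⟨S.zero_mem, fun _ hx _ hy => S.add_mem hx hy, hS⟩, hMS⟩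
end

section
/- If an ω-monoid is not a tempered monoid, then it is a positive scalar multiple of a numerical semigroup: if Ω ⊆ ℝ is closed under addition, is the range of a strictly increasing sequence a : ℕ → ℝ with a(0) = 0, and the sequence of differences a(n+1) − a(n) does not converge to 0, then there exist λ > 0 and a numerical semigroup S with Ω = {λ·s : s ∈ S}. -/
open Filter Topology

/-!
If two elements `0 < x < y` of an additively closed `Ω ⊆ [0, ∞)` are close, the sums
`(q - j) x + j y` meet every late enough interval of length `y - x`, so the gaps of the
enumeration are eventually at most `y - x`. Hence, if the gaps do not tend to `0`, the group
generated by `Ω` has an isolated zero and is therefore `ℤ l` for some `l > 0`. Then `Ω = l S` for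
a submonoid `S` of `ℕ`, and writing `l = u - v` with `u, v ∈ Ω` puts two consecutive integers in
`S`, so `S` has gcd `1` and is cofinite.
-/

theorem exists_add_nat_mul_mem_Ioc {b t d : ℝ} {q : ℕ} (hd : 0 < d) (hbt : b ≤ t)
    (htq : t < b + q * d) : ∃ j ≤ q, b + j * d ∈ Set.Ioc t (t + d) := by
  have hr : 0 ≤ (t - b) / d := div_nonneg (sub_nonneg.2 hbt) hd.le
  refine ⟨⌊(t - b) / d⌋₊ + 1, ?_, ?_, ?_⟩
  · exact (Nat.floor_lt hr).2 ((div_lt_iff₀ hd).2 (by linarith))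
  · have := Nat.lt_floor_add_one ((t - b) / d)
    rw [div_lt_iff₀ hd] at this
    push_cast
    linarith
  · have := Nat.floor_le hr
    rw [le_div_iff₀ hd] at this
    push_cast
    linarith

theorem AddSubgroup.mem_closure_addSubmonoid_iff {G : Type*} [AddCommGroup G]
    (M : AddSubmonoid G) {g : G} :
    g ∈ AddSubgroup.closure (M : Set G) ↔ ∃ u ∈ M, ∃ v ∈ M, u - v = g := by
  constructor
  · intro hg
    induction hg using AddSubgroup.closure_induction with
    | mem x hx => exact ⟨x, hx, 0, M.zero_mem, sub_zero x⟩
    | zero => exact ⟨0, M.zero_mem, 0, M.zero_mem, sub_zero 0⟩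
    | add _ _ _ _ h₁ h₂ =>
      obtain ⟨u, hu, v, hv, rfl⟩ := h₁
      obtain ⟨u', hu', v', hv', rfl⟩ := h₂
      exact ⟨u + u', add_mem hu hu', v + v', add_mem hv hv', by abel⟩
    | neg _ _ h =>
      obtain ⟨u, hu, v, hv, rfl⟩ := h
      exact ⟨v, hv, u, hu, (neg_sub u v).symm⟩
  · rintro ⟨u, hu, v, hv, rfl⟩
    exact sub_mem (AddSubgroup.subset_closure hu) (AddSubgroup.subset_closure hv)

theorem exists_nat_mul_eq_of_mem_zmultiples {l x : ℝ} (hl : 0 < l)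
    (hx : x ∈ AddSubgroup.zmultiples l) (hx0 : 0 ≤ x) : ∃ n : ℕ, l * n = x := by
  obtain ⟨k, rfl⟩ := AddSubgroup.mem_zmultiples_iff.1 hx
  rw [zsmul_eq_mul] at hx0 ⊢
  lift k to ℕ using by exact_mod_cast nonneg_of_mul_nonneg_left hx0 hl
  exact ⟨k, by push_cast; ring⟩

theorem AddSubmonoid.finite_compl_of_mem_of_succ_mem (S : AddSubmonoid ℕ) {q : ℕ} (hq : q ∈ S)
    (hq1 : q + 1 ∈ S) : (S : Set ℕ)ᶜ.Finite := by
  have hgcd : Nat.setGcd S = 1 :=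
    Nat.dvd_one.1 ((Nat.dvd_add_right (Nat.setGcd_dvd_of_mem hq)).1 (Nat.setGcd_dvd_of_mem hq1))
  obtain ⟨n, hn⟩ := Nat.exists_mem_closure_of_ge (S : Set ℕ)
  refine (Set.finite_Iio n).subset fun m hm => ?_
  by_contra! h
  exact hm (S.closure_eq ▸ hn m (not_lt.1 h) (hgcd ▸ one_dvd m))

namespace AddSubmonoid

variable (M : AddSubmonoid ℝ)

theorem exists_mem_Ioc_of_lt {x y t : ℝ} (hx : x ∈ M) (hy : y ∈ M) (hx0 : 0 < x) (hxy : x < y)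
    (ht : x * y / (y - x) ≤ t) : ∃ z ∈ M, z ∈ Set.Ioc t (t + (y - x)) := by
  have hd : 0 < y - x := sub_pos.2 hxy
  rw [div_le_iff₀ hd] at ht
  set q := ⌊t / x⌋₊
  have ht0 : 0 ≤ t := nonneg_of_mul_nonneg_left (by nlinarith) hd
  have hqt : q * x ≤ t := (le_div_iff₀ hx0).1 (Nat.floor_le (div_nonneg ht0 hx0.le))
  have htq : t < (q + 1) * x := (div_lt_iff₀ hx0).1 (Nat.lt_floor_add_one _)
  -- The bound on `t` gives `x < q * (y - x)`, so `q * x + j * (y - x)`, `j ≤ q`, runs past `t`.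
  obtain ⟨j, hjq, hj⟩ := exists_add_nat_mul_mem_Ioc hd hqt (by nlinarith)
  refine ⟨(q - j) • x + j • y, add_mem (nsmul_mem hx _) (nsmul_mem hy _), ?_⟩
  convert hj using 1
  rw [nsmul_eq_mul, nsmul_eq_mul, Nat.cast_sub hjq]
  ring

theorem tendsto_atTop_of_range_eq {a : ℕ → ℝ} (hmono : Monotone a) (hrange : Set.range a = M)
    {x : ℝ} (hx : x ∈ M) (hx0 : 0 < x) : Tendsto a atTop atTop := by
  refine tendsto_atTop_atTop_of_monotone hmono fun b => ?_
  obtain ⟨n, hn⟩ := Archimedean.arch b hx0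
  obtain ⟨m, hm⟩ : n • x ∈ Set.range a := hrange ▸ nsmul_mem hx n
  exact ⟨m, hm ▸ hn⟩

theorem tendsto_succ_sub_of_forall_exists_close {a : ℕ → ℝ} (hmono : Monotone a)
    (hrange : Set.range a = M)
    (h : ∀ δ > 0, ∃ x ∈ M, ∃ y ∈ M, 0 < x ∧ x < y ∧ y - x < δ) :
    Tendsto (fun n => a (n + 1) - a n) atTop (𝓝 0) := by
  obtain ⟨x₁, hx₁, -, -, hx₁0, -⟩ := h 1 one_pos
  have htop := M.tendsto_atTop_of_range_eq hmono hrange hx₁ hx₁0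
  refine tendsto_order.2 ⟨fun c hc => Eventually.of_forall fun n =>
    hc.trans_le (sub_nonneg.2 (hmono n.le_succ)), fun δ hδ => ?_⟩
  obtain ⟨x, hx, y, hy, hx0, hxy, hyx⟩ := h δ hδ
  filter_upwards [htop.eventually_ge_atTop (x * y / (y - x))] with n hn
  obtain ⟨z, hz, hnz, hzn⟩ := M.exists_mem_Ioc_of_lt hx hy hx0 hxy hn
  obtain ⟨m, rfl⟩ : z ∈ Set.range a := hrange ▸ hz
  have : a (n + 1) ≤ a m := hmono (hmono.reflect_lt hnz)
  linarith

theorem exists_disjoint_closure_Ioo {a : ℕ → ℝ} (hmono : Monotone a) (hrange : Set.range a = M)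
    (hM : ∀ x ∈ M, 0 ≤ x) (hnt : ¬Tendsto (fun n => a (n + 1) - a n) atTop (𝓝 0)) :
    ∃ ε > 0, Disjoint (AddSubgroup.closure (M : Set ℝ) : Set ℝ) (Set.Ioo 0 ε) := by
  by_contra! h
  refine hnt (M.tendsto_succ_sub_of_forall_exists_close hmono hrange fun δ hδ => ?_)
  obtain ⟨g, hg, hg0, hgδ⟩ := Set.not_disjoint_iff.1 (h δ hδ)
  obtain ⟨u, hu, v, hv, rfl⟩ := (AddSubgroup.mem_closure_addSubmonoid_iff M).1 hg
  have hv0 := hM v hv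
  -- Shifting the pair `v < u` by `u` keeps its distance and makes the smaller element positive.
  exact ⟨u + v, add_mem hu hv, u + u, add_mem hu hu, by linarith, by linarith, by linarith⟩

theorem exists_finite_compl_image_eq (hM : ∀ x ∈ M, 0 ≤ x) {l : ℝ} (hl : 0 < l)
    (hG : AddSubgroup.closure (M : Set ℝ) = AddSubgroup.zmultiples l) :
    ∃ S : AddSubmonoid ℕ, (S : Set ℕ)ᶜ.Finite ∧ (M : Set ℝ) = (fun s : ℕ => l * s) '' S := by
  let f : ℕ →+ ℝ := (AddMonoidHom.mulLeft l).comp (Nat.castAddMonoidHom ℝ)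
  have hf (n : ℕ) : f n = l * n := rfl
  have hrange : (M : Set ℝ) ⊆ Set.range f := fun x hx =>
    exists_nat_mul_eq_of_mem_zmultiples hl (hG ▸ AddSubgroup.subset_closure hx) (hM x hx)
  refine ⟨M.comap f, ?_, (Set.image_preimage_eq_of_subset hrange).symm⟩
  obtain ⟨u, hu, v, hv, huv⟩ :=
    (AddSubgroup.mem_closure_addSubmonoid_iff M).1 (hG ▸ AddSubgroup.mem_zmultiples l)
  obtain ⟨p, rfl⟩ := hrange hu
  obtain ⟨q, rfl⟩ := hrange hv
  have hpq : p = q + 1 := by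
    have : l * p = l * (q + 1) := by rw [hf, hf] at huv; linarith
    exact_mod_cast mul_left_cancel₀ hl.ne' this
  exact (M.comap f).finite_compl_of_mem_of_succ_mem hv (hpq ▸ hu)

end AddSubmonoid

/-- If an ω-monoid is not a tempered monoid, then it is a positive scalar multiple of a
numerical semigroup. -/
theorem not_tempered_is_scaled_numerical_semigroup
    (Ω : Set ℝ) (a : ℕ → ℝ)
    (hadd : ∀ x ∈ Ω, ∀ y ∈ Ω, x + y ∈ Ω)
    (hmono : StrictMono a) (h0 : a 0 = 0) (hrange : Set.range a = Ω)
    (hnt : ¬ Tendsto (fun n => a (n + 1) - a n) atTop (𝓝 0)) :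
    ∃ l : ℝ, 0 < l ∧ ∃ S : Set ℕ,
      (0 ∈ S ∧ (∀ x ∈ S, ∀ y ∈ S, x + y ∈ S) ∧ Sᶜ.Finite) ∧
      Ω = (fun s : ℕ => l * (s : ℝ)) '' S := by
  subst hrange
  let M : AddSubmonoid ℝ :=
    { carrier := Set.range a
      add_mem' := fun hx hy => hadd _ hx _ hy
      zero_mem' := ⟨0, h0⟩ }
  have hM : ∀ x ∈ M, 0 ≤ x := by
    rintro _ ⟨n, rfl⟩
    exact h0 ▸ hmono.monotone n.zero_le
  obtain ⟨ε, hε, hdisj⟩ := M.exists_disjoint_closure_Ioo hmono.monotone rfl hM hnt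
  have hbot : AddSubgroup.closure (M : Set ℝ) ≠ ⊥ :=
    mt AddSubgroup.closure_eq_bot_iff.1 fun h => (h0 ▸ hmono zero_lt_one).ne' (h ⟨1, rfl⟩)
  obtain ⟨l, hl⟩ := AddSubgroup.exists_isLeast_pos hbot hε hdisj
  obtain ⟨S, hS, hMS⟩ := M.exists_finite_compl_image_eq hM hl.1.2
    (by rw [AddSubgroup.cyclic_of_min hl, AddSubgroup.zmultiples_eq_closure])
  exact ⟨l, hl.1.2, S, ⟨S.zero_mem, fun _ hx _ hy => S.add_mem hx hy, hS⟩, hMS⟩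
end

section
/- If the minimal generating set G(Ω) = Ω* \ (Ω* + Ω*) of an ω-monoid Ω is infinite, then Ω is a tempered monoid, i.e., its increasing enumeration (a_n) satisfies a(n+1) − a(n) → 0. -/
open Filter Topology Pointwise

/-!
Fix `p > 0` in `Ω`. Distinct minimal generators are incongruent modulo `p`, since otherwise the
larger one would be the smaller one plus a positive multiple of `p`. So infinitely many of them
have residues mod `p` that come arbitrarily close without coinciding, and shifting by multiples
of `p` gives `0 < u < v` in `Ω` with `v - u < ε`. The sums `(m - i) u + i v`, `0 ≤ i ≤ m`, form a
`(v - u)`-net of `[m u, m v]`; these intervals overlap as soon as `m (v - u) ≥ u`, so eventually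
every gap of `Ω` is at most `v - u`.
-/

def minimalGenerators {M : Type*} [AddZeroClass M] (Ω : Set M) : Set M :=
  (Ω \ {0}) \ ((Ω \ {0}) + (Ω \ {0}))

theorem Set.Infinite.exists_ne_abs_sub_sub_int_mul_lt {s : Set ℝ} (hs : s.Infinite) {p ε : ℝ}
    (hp : 0 < p) (hε : 0 < ε) : ∃ x ∈ s, ∃ y ∈ s, x ≠ y ∧ ∃ k : ℤ, |y - x - k * p| < ε := by
  obtain ⟨M, hM⟩ := exists_nat_gt (p / ε)
  have hM0 : (0 : ℝ) < M := (div_pos hp hε).trans hM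
  have hmaps : Set.MapsTo (fun x => ⌊Int.fract (x / p) * M⌋) s (Set.Ico 0 M) := fun x _ =>
    ⟨Int.floor_nonneg.2 (by positivity),
      Int.floor_lt.2 (by push_cast; nlinarith [Int.fract_lt_one (x / p)])⟩
  obtain ⟨x, hx, y, hy, hxy, hbucket⟩ := hs.exists_ne_map_eq_of_mapsTo hmaps (Set.finite_Ico _ _)
  refine ⟨x, hx, y, hy, hxy, ⌊y / p⌋ - ⌊x / p⌋, ?_⟩
  have hfract : |Int.fract (y / p) - Int.fract (x / p)| * M < 1 := by
    rw [← abs_of_pos hM0, ← abs_mul, sub_mul]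
    exact Int.abs_sub_lt_one_of_floor_eq_floor hbucket.symm
  have hdiff : y - x - ((⌊y / p⌋ - ⌊x / p⌋ : ℤ) : ℝ) * p
      = p * (Int.fract (y / p) - Int.fract (x / p)) := by
    simp only [Int.fract, Int.cast_sub]
    field_simp
    ring
  have hpM : p < M * ε := (div_lt_iff₀ hε).1 hM
  rw [hdiff, abs_mul, abs_of_pos hp]
  nlinarith [abs_nonneg (Int.fract (y / p) - Int.fract (x / p))]

namespace AddSubmonoid

variable (S : AddSubmonoid ℝ)

theorem eq_of_mem_minimalGenerators_of_eq_add_int_mul {p x y : ℝ} (hp : p ∈ S) (hp0 : 0 < p)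
    (hx : x ∈ minimalGenerators (S : Set ℝ)) (hy : y ∈ minimalGenerators (S : Set ℝ)) {k : ℤ}
    (hxy : y = x + k * p) : x = y := by
  have hnp : ∀ n : ℕ, n ≠ 0 → n • p ∈ (S : Set ℝ) \ {0} := fun n hn =>
    ⟨S.nsmul_mem hp n, (nsmul_pos hp0 hn).ne'⟩
  obtain ⟨n, rfl | rfl⟩ := k.eq_nat_or_neg <;> rcases eq_or_ne n 0 with rfl | hn
  · simpa using hxy.symm
  · refine absurd (Set.add_mem_add hx.1 (hnp n hn)) ?_
    rw [nsmul_eq_mul, show x + n * p = y by push_cast at hxy; linarith]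
    exact hy.2
  · simpa using hxy.symm
  · refine absurd (Set.add_mem_add hy.1 (hnp n hn)) ?_
    rw [nsmul_eq_mul, show y + n * p = x by push_cast at hxy; linarith]
    exact hx.2

theorem exists_mem_lt_lt_add_of_sub_sub_int_mul {p x y ε : ℝ} (hp : p ∈ S) (hp0 : 0 ≤ p)
    (hx : x ∈ S) (hx0 : 0 < x) (hy : y ∈ S) {k : ℤ} (hpos : 0 < y - x - k * p)
    (hlt : y - x - k * p < ε) : ∃ u ∈ S, ∃ v ∈ S, 0 < u ∧ u < v ∧ v < u + ε := by
  obtain ⟨n, rfl | rfl⟩ := k.eq_nat_or_neg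
  · refine ⟨x + n • p, S.add_mem hx (S.nsmul_mem hp n), y, hy, by positivity, ?_, ?_⟩ <;>
      · rw [nsmul_eq_mul]; push_cast at hpos hlt; linarith
  · refine ⟨x, hx, y + n • p, S.add_mem hy (S.nsmul_mem hp n), hx0, ?_, ?_⟩ <;>
      · rw [nsmul_eq_mul]; push_cast at hpos hlt; linarith

theorem exists_mem_lt_lt_add (hS : ∀ x ∈ S, 0 ≤ x) {p : ℝ} (hp : p ∈ S) (hp0 : 0 < p)
    (hinf : (minimalGenerators (S : Set ℝ)).Infinite) {ε : ℝ} (hε : 0 < ε) :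
    ∃ u ∈ S, ∃ v ∈ S, 0 < u ∧ u < v ∧ v < u + ε := by
  obtain ⟨x, hx, y, hy, hxy, k, hk⟩ := hinf.exists_ne_abs_sub_sub_int_mul_lt hp0 hε
  have hpos : ∀ z ∈ minimalGenerators (S : Set ℝ), 0 < z := fun z hz =>
    (hS z hz.1.1).lt_of_ne' hz.1.2
  have hne : y - x - k * p ≠ 0 := fun h =>
    hxy (S.eq_of_mem_minimalGenerators_of_eq_add_int_mul hp hp0 hx hy (by linarith))
  rcases hne.lt_or_gt with hneg | hpos'
  · refine S.exists_mem_lt_lt_add_of_sub_sub_int_mul (k := -k) hp hp0.le hy.1.1 (hpos y hy)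
      hx.1.1 ?_ ?_ <;> push_cast <;> linarith [abs_lt.1 hk]
  · exact S.exists_mem_lt_lt_add_of_sub_sub_int_mul hp hp0.le hx.1.1 (hpos x hx) hy.1.1 hpos'
      (lt_of_abs_lt hk)

theorem exists_mem_Ioc_of_mem_Ico {u v t : ℝ} (hu : u ∈ S) (hv : v ∈ S) (huv : u < v) {m : ℕ}
    (ht : t ∈ Set.Ico (m * u) (m * v)) : ∃ x ∈ S, x ∈ Set.Ioc t (t + (v - u)) := by
  have hη : 0 < v - u := sub_pos.2 huv
  set q := (t - m * u) / (v - u)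
  have hq : 0 ≤ q := div_nonneg (sub_nonneg.2 ht.1) hη.le
  have hqm : ⌊q⌋₊ < m := (Nat.floor_lt hq).2 ((div_lt_iff₀ hη).2 (by linarith [ht.2]))
  have hqt : q * (v - u) = t - m * u := div_mul_cancel₀ _ hη.ne'
  refine ⟨(m - (⌊q⌋₊ + 1)) • u + (⌊q⌋₊ + 1) • v,
    S.add_mem (S.nsmul_mem hu _) (S.nsmul_mem hv _), ?_⟩
  have hle : ⌊q⌋₊ + 1 ≤ m := hqm
  push_cast [nsmul_eq_mul, Nat.cast_sub hle]
  constructor <;> nlinarith [mul_le_mul_of_nonneg_right (Nat.floor_le hq) hη.le,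
    mul_lt_mul_of_pos_right (Nat.lt_floor_add_one q) hη]

theorem eventually_exists_mem_Ioc_s3 {u v : ℝ} (hu : u ∈ S) (hv : v ∈ S) (hu0 : 0 < u)
    (huv : u < v) : ∀ᶠ t in atTop, ∃ x ∈ S, x ∈ Set.Ioc t (t + (v - u)) := by
  filter_upwards [eventually_ge_atTop (u * v / (v - u))] with t ht
  have hη : 0 < v - u := sub_pos.2 huv
  have ht0 : 0 ≤ t := le_trans (div_nonneg (mul_nonneg hu0.le (hu0.trans huv).le) hη.le) ht
  set m := ⌊t / u⌋₊
  have htm : t < (m + 1) * u := (div_lt_iff₀ hu0).1 (Nat.lt_floor_add_one _)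
  have hv_lt : v < (m + 1) * (v - u) := by
    refine lt_of_mul_lt_mul_left ?_ hu0.le
    nlinarith [(div_le_iff₀ hη).1 ht, mul_lt_mul_of_pos_right htm hη]
  refine S.exists_mem_Ioc_of_mem_Ico hu hv huv ⟨?_, by linarith⟩
  exact (le_div_iff₀ hu0).1 (Nat.floor_le (div_nonneg ht0 hu0.le))

end AddSubmonoid

/-- If the minimal generating set of an ω-monoid is infinite, then it is a tempered
monoid. -/
theorem infinite_minimal_generating_set_tempered
    (Ω : Set ℝ) (a : ℕ → ℝ)
    (hadd : ∀ x ∈ Ω, ∀ y ∈ Ω, x + y ∈ Ω)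
    (hmono : StrictMono a) (h0 : a 0 = 0) (hrange : Set.range a = Ω)
    (hinf : ((Ω \ {0}) \ ((Ω \ {0}) + (Ω \ {0}))).Infinite) :
    Tendsto (fun n => a (n + 1) - a n) atTop (𝓝 0) := by
  subst hrange
  let S : AddSubmonoid ℝ :=
    { carrier := Set.range a, add_mem' := fun hx hy => hadd _ hx _ hy, zero_mem' := ⟨0, h0⟩ }
  have hS : ∀ x ∈ S, 0 ≤ x := by
    rintro _ ⟨n, rfl⟩
    exact h0 ▸ hmono.monotone n.zero_le
  have hp0 : 0 < a 1 := h0 ▸ hmono zero_lt_one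
  have hp : a 1 ∈ S := ⟨1, rfl⟩
  have ha : Tendsto a atTop atTop := tendsto_atTop_atTop_of_monotone hmono.monotone fun b => by
    obtain ⟨n, hn⟩ := Archimedean.arch b hp0
    obtain ⟨m, hm⟩ : n • a 1 ∈ Set.range a := S.nsmul_mem hp n
    exact ⟨m, hm ▸ hn⟩
  refine tendsto_order.2 ⟨fun b hb => .of_forall fun n =>
    hb.trans_le (sub_nonneg.2 (hmono.monotone n.le_succ)), fun ε hε => ?_⟩
  obtain ⟨u, hu, v, hv, hu0, huv, hvu⟩ := S.exists_mem_lt_lt_add hS hp hp0 hinf hε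
  filter_upwards [ha.eventually (S.eventually_exists_mem_Ioc_s3 hu hv hu0 huv)]
    with n ⟨_, ⟨m, rfl⟩, hnm, hmn⟩
  have : a (n + 1) ≤ a m := hmono.monotone (hmono.lt_iff_lt.1 hnm)
  linarith
end

section
/- Let Ω be an ω-monoid with smallest nonzero element 1 (normalized) and increasing enumeration (a_n), and suppose its footprint Δ contains an element δ with 0 < δ < 1. Then there exists N such that a(n+1) − a(n) ≤ δ for all n ≥ N. In particular, if Ω is not tempered with gap constant ε (i.e., for every n there exists N > n with a(N+1) − a(N) > ε), then Δ ∩ (0, ε) = ∅. -/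
/-!
If `x ∈ Ω` has fractional part `δ > 0`, then `Ω` contains all `k x + j` with `k, j ∈ ℕ`, and
`k x + j = ⌊t⌋ + k δ` for `j = ⌊t⌋ - k ⌊x⌋`. Choosing `k` with `k δ ∈ (fract t, fract t + δ]`
forces `k ≤ (1 + δ) / δ`, so `j ≥ 0` once `t` is large; hence every interval `(t, t + δ]` far
enough out meets `Ω`, and consecutive elements of `Ω` are eventually at most `δ` apart.
-/

open Set

theorem AddSubmonoid.natCast_mem_of_one_mem {R : Type*} [AddMonoidWithOne R] {S : AddSubmonoid R}
    (h1 : (1 : R) ∈ S) (n : ℕ) : (n : R) ∈ S := by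
  simpa using nsmul_mem h1 n

theorem AddSubmonoid.exists_mem_Ioc_of_fract_pos {S : AddSubmonoid ℝ} (h1 : (1 : ℝ) ∈ S)
    {x : ℝ} (hx : x ∈ S) (hδ : 0 < Int.fract x) :
    ∃ T, ∀ t ≥ T, ∃ y ∈ S, y ∈ Ioc t (t + Int.fract x) := by
  set δ := Int.fract x
  refine ⟨(1 + δ) / δ * |x|, fun t ht => ?_⟩
  obtain ⟨k, hk⟩ := (existsUnique_add_zsmul_mem_Ioc hδ 0 (Int.fract t)).exists
  simp only [zero_add, zsmul_eq_mul, mem_Ioc] at hk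
  have hk_nonneg : 0 ≤ k := by
    have : (0 : ℝ) < k := pos_of_mul_pos_left ((Int.fract_nonneg t).trans_lt hk.1) hδ.le
    exact_mod_cast this.le
  lift k to ℕ using hk_nonneg
  push_cast at hk
  have hkx_le : ((k * ⌊x⌋ : ℤ) : ℝ) ≤ t := by
    have hk_le : (k : ℝ) ≤ (1 + δ) / δ := by
      rw [le_div_iff₀ hδ]
      linarith [Int.fract_lt_one t]
    push_cast
    calc (k : ℝ) * ⌊x⌋ ≤ k * |x| := by gcongr; exact (Int.floor_le x).trans (le_abs_self x)
      _ ≤ (1 + δ) / δ * |x| := by gcongr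
      _ ≤ t := ht
  obtain ⟨j, hj⟩ := Int.eq_ofNat_of_zero_le (sub_nonneg.2 (Int.le_floor.2 hkx_le))
  have hj_real : (j : ℝ) = ⌊t⌋ - k * ⌊x⌋ := by exact_mod_cast hj.symm
  have hy : k * x + j = ⌊t⌋ + k * δ := by
    rw [hj_real]
    linear_combination (k : ℝ) * (Int.floor_add_fract x).symm
  refine ⟨k * x + j, add_mem (by simpa using nsmul_mem hx k) (natCast_mem_of_one_mem h1 j), ?_⟩
  rw [mem_Ioc, hy]
  constructor <;> linarith [Int.floor_add_fract t]

theorem StrictMono.sub_le_of_forall_exists_mem_Ioc {α : Type*} [AddCommGroup α] [LinearOrder α]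
    [IsOrderedAddMonoid α] {a : ℕ → α} (hmono : StrictMono a) {N : ℕ} {δ : α}
    (h : ∀ t ≥ a N, ∃ p, a p ∈ Ioc t (t + δ)) {n : ℕ} (hn : N ≤ n) : a (n + 1) - a n ≤ δ := by
  obtain ⟨p, hnp, hp⟩ := h (a n) (hmono.monotone hn)
  rw [sub_le_iff_le_add']
  exact (hmono.monotone (hmono.lt_iff_lt.1 hnp)).trans hp

theorem footprint_small_element_eventual_gap_bound_general
    (Ω : Set ℝ) (a : ℕ → ℝ)
    (hadd : ∀ x ∈ Ω, ∀ y ∈ Ω, x + y ∈ Ω)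
    (hmono : StrictMono a) (h0 : a 0 = 0) (hrange : Set.range a = Ω)
    (hone : 1 ∈ Ω) :
    (∀ δ ∈ Int.fract '' Ω, 0 < δ → δ < 1 →
      ∃ N : ℕ, ∀ n ≥ N, a (n + 1) - a n ≤ δ) ∧
    ∀ ε : ℝ, (∀ n : ℕ, ∃ N : ℕ, N > n ∧ a (N + 1) - a N > ε) →
      Int.fract '' Ω ∩ Set.Ioo 0 ε = ∅ := by
  let S : AddSubmonoid ℝ := ⟨⟨Ω, fun {x y} hx hy => hadd x hx y hy⟩, hrange ▸ ⟨0, h0⟩⟩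
  have eventually_gap_le : ∀ δ ∈ Int.fract '' Ω, 0 < δ →
      ∃ N : ℕ, ∀ n ≥ N, a (n + 1) - a n ≤ δ := by
    rintro _ ⟨x, hx, rfl⟩ hδ
    obtain ⟨T, hT⟩ := S.exists_mem_Ioc_of_fract_pos hone hx hδ
    obtain ⟨N, hN⟩ : (⌈T⌉₊ : ℝ) ∈ range a := hrange ▸ S.natCast_mem_of_one_mem hone ⌈T⌉₊
    refine ⟨N, fun n hn => hmono.sub_le_of_forall_exists_mem_Ioc (fun t ht => ?_) hn⟩
    obtain ⟨y, hyΩ, hy⟩ := hT t ((Nat.le_ceil T).trans (hN ▸ ht))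
    obtain ⟨p, rfl⟩ : y ∈ range a := hrange ▸ hyΩ
    exact ⟨p, hy⟩
  refine ⟨fun δ hδ hδ_pos _ => eventually_gap_le δ hδ hδ_pos, fun ε hε => ?_⟩
  refine eq_empty_iff_forall_notMem.2 fun δ ⟨hδ, hδ_pos, hδε⟩ => ?_
  obtain ⟨N, hN⟩ := eventually_gap_le δ hδ hδ_pos
  obtain ⟨M, hMN, hgap⟩ := hε N
  linarith [hN M hMN.le]

/-- For a normalized ω-monoid whose footprint contains `δ` with `0 < δ < 1`, the gaps are
eventually at most `δ`; in particular, if the monoid is not tempered with gap constant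
`ε`, then the footprint avoids `(0, ε)`. -/
theorem footprint_small_element_eventual_gap_bound
    (Ω : Set ℝ) (a : ℕ → ℝ)
    (hadd : ∀ x ∈ Ω, ∀ y ∈ Ω, x + y ∈ Ω)
    (hmono : StrictMono a) (h0 : a 0 = 0) (hrange : Set.range a = Ω)
    (hone : 1 ∈ Ω) (hnorm : ∀ x ∈ Ω, x ≠ 0 → 1 ≤ x) :
    (∀ δ ∈ Int.fract '' Ω, 0 < δ → δ < 1 →
      ∃ N : ℕ, ∀ n ≥ N, a (n + 1) - a n ≤ δ) ∧
    ∀ ε : ℝ, (∀ n : ℕ, ∃ N : ℕ, N > n ∧ a (N + 1) - a N > ε) →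
      Int.fract '' Ω ∩ Set.Ioo 0 ε = ∅ :=
  footprint_small_element_eventual_gap_bound_general Ω a hadd hmono h0 hrange hone
end

section
/- Let Ω be an ω-monoid with smallest nonzero element 1 (normalized) and increasing enumeration (a_n), and suppose its footprint Δ contains an element of the form 1 − δ with 0 < δ < 1. Then there exists N such that a(n+1) − a(n) ≤ δ for all n ≥ N. In particular, if Ω is not tempered with gap constant ε (i.e., for every n there exists N > n with a(N+1) − a(N) > ε), then Δ ∩ (1 − ε, 1) = ∅. -/
/-!
Write `x ∈ Ω` with `Int.fract x = 1 - δ` as `x = q - δ` with `q` an integer. Since `Ω` contains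
`1` and `x` and is closed under addition, it contains every `n - j * δ = j * x + (n - j * q)`
with `n - j * q ≥ 0`; for `j * δ < 1` these points meet every interval `(t, t + δ]` with `t`
large. The least element of `Ω` above `a n` is `a (n + 1)`, so the gaps are eventually at most
`δ`. The second claim applies this to `δ = 1 - y` for `y` in the footprint and `y > 1 - ε`.
-/

open Filter Set

theorem exists_nat_mul_lt_le_succ_mul {s δ : ℝ} (hs : 0 < s) (hδ : 0 < δ) :
    ∃ j : ℕ, j * δ < s ∧ s ≤ (j + 1) * δ := by
  have hpos : 0 < ⌈s / δ⌉₊ := Nat.ceil_pos.mpr (div_pos hs hδ)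
  obtain ⟨hlt, hle⟩ := (Nat.ceil_eq_iff hpos.ne').1 rfl
  refine ⟨⌈s / δ⌉₊ - 1, (lt_div_iff₀ hδ).1 hlt, ?_⟩
  rw [Nat.cast_pred hpos, sub_add_cancel]
  exact (div_le_iff₀ hδ).1 hle

theorem AddSubmonoid.eventually_exists_mem_Ioc_of_fract_eq (M : AddSubmonoid ℝ) {x δ : ℝ}
    (h1 : (1 : ℝ) ∈ M) (hx : x ∈ M) (hδ : 0 < δ) (hfract : Int.fract x = 1 - δ) :
    ∀ᶠ t in atTop, ∃ z ∈ M, z ∈ Ioc t (t + δ) := by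
  filter_upwards [eventually_ge_atTop ((|x| + 1) / δ)] with t ht
  have hs : 0 < ⌊t⌋ + 1 - t := by linarith [Int.lt_floor_add_one t]
  obtain ⟨j, hj_lt, hj_le⟩ := exists_nat_mul_lt_le_succ_mul hs hδ
  set q : ℤ := ⌊x⌋ + 1 with hq
  have hq_le : (q : ℝ) ≤ x + 1 := by rw [hq]; push_cast; linarith [Int.floor_le x]
  have hxq : x = q - δ := by rw [hq]; push_cast; linarith [Int.floor_add_fract x]
  have hm : 0 ≤ ⌊t⌋ + 1 - j * q := by
    have hjq : (j : ℝ) * q < ⌊t⌋ + 1 := calc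
      (j : ℝ) * q ≤ j * (|x| + 1) := by gcongr; linarith [le_abs_self x]
      _ < (|x| + 1) / δ := by
        rw [lt_div_iff₀ hδ, mul_right_comm]
        exact mul_lt_of_lt_one_left (by positivity) (by linarith [Int.floor_le t])
      _ < ⌊t⌋ + 1 := by linarith [Int.lt_floor_add_one t]
    rw [sub_nonneg]
    exact_mod_cast hjq.le
  lift ⌊t⌋ + 1 - j * q to ℕ using hm with m hm_eq
  refine ⟨j • x + m • 1, M.add_mem (M.nsmul_mem hx j) (M.nsmul_mem h1 m), ?_⟩
  have hz : j • x + m • (1 : ℝ) = ⌊t⌋ + 1 - j * δ := by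
    have hm_real : (m : ℝ) = ⌊t⌋ + 1 - j * q := by exact_mod_cast hm_eq
    rw [nsmul_eq_mul, nsmul_one, hm_real, hxq]
    ring
  rw [hz]
  constructor <;> linarith

theorem StrictMono.eventually_sub_le_of_eventually_exists_mem_Ioc {a : ℕ → ℝ} {δ : ℝ}
    (ha : StrictMono a) (h : ∀ᶠ t in atTop, ∃ z ∈ range a, z ∈ Ioc t (t + δ)) :
    ∀ᶠ n in atTop, a (n + 1) - a n ≤ δ := by
  obtain ⟨C, hC⟩ := eventually_atTop.1 h
  obtain ⟨_, ⟨N, rfl⟩, hCN, -⟩ := hC C le_rfl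
  filter_upwards [eventually_ge_atTop N] with n hn
  obtain ⟨_, ⟨m, rfl⟩, hnm, hm⟩ := hC (a n) (hCN.le.trans (ha.monotone hn))
  have : a (n + 1) ≤ a m := ha.monotone (ha.lt_iff_lt.1 hnm)
  linarith

theorem footprint_large_element_eventual_gap_bound_general
    (Ω : Set ℝ) (a : ℕ → ℝ)
    (hadd : ∀ x ∈ Ω, ∀ y ∈ Ω, x + y ∈ Ω)
    (hmono : StrictMono a) (h0 : a 0 = 0) (hrange : Set.range a = Ω)
    (hone : 1 ∈ Ω) :
    (∀ δ : ℝ, 0 < δ → δ < 1 → (1 - δ) ∈ Int.fract '' Ω →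
      ∃ N : ℕ, ∀ n ≥ N, a (n + 1) - a n ≤ δ) ∧
    ∀ ε : ℝ, (∀ n : ℕ, ∃ N : ℕ, N > n ∧ a (N + 1) - a N > ε) →
      Int.fract '' Ω ∩ Set.Ioo (1 - ε) 1 = ∅ := by
  let M : AddSubmonoid ℝ := ⟨⟨Ω, fun hx hy ↦ hadd _ hx _ hy⟩, hrange ▸ ⟨0, h0⟩⟩
  have gap_le : ∀ δ, 0 < δ → 1 - δ ∈ Int.fract '' Ω → ∀ᶠ n in atTop, a (n + 1) - a n ≤ δ := by
    rintro δ hδ ⟨x, hx, hfract⟩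
    refine hmono.eventually_sub_le_of_eventually_exists_mem_Ioc ?_
    rw [hrange]
    exact M.eventually_exists_mem_Ioc_of_fract_eq (by exact hone) hx hδ hfract
  refine ⟨fun δ hδ _ hfoot ↦ eventually_atTop.1 (gap_le δ hδ hfoot), fun ε hε ↦ ?_⟩
  refine eq_empty_of_forall_notMem ?_
  rintro y ⟨hy, hyε, hy1⟩
  have hfreq : ∃ᶠ n in atTop, ε < a (n + 1) - a n := frequently_atTop'.2 hε
  obtain ⟨n, hn_le, hn_gt⟩ :=
    ((gap_le (1 - y) (by linarith) (by rwa [sub_sub_cancel])).and_frequently hfreq).exists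
  linarith

/-- For a normalized ω-monoid whose footprint contains `1 - δ` with `0 < δ < 1`, the gaps
are eventually at most `δ`; in particular, if the monoid is not tempered with gap
constant `ε`, then the footprint avoids `(1 - ε, 1)`. -/
theorem footprint_large_element_eventual_gap_bound
    (Ω : Set ℝ) (a : ℕ → ℝ)
    (hadd : ∀ x ∈ Ω, ∀ y ∈ Ω, x + y ∈ Ω)
    (hmono : StrictMono a) (h0 : a 0 = 0) (hrange : Set.range a = Ω)
    (hone : 1 ∈ Ω) (hnorm : ∀ x ∈ Ω, x ≠ 0 → 1 ≤ x) :
    (∀ δ : ℝ, 0 < δ → δ < 1 → (1 - δ) ∈ Int.fract '' Ω →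
      ∃ N : ℕ, ∀ n ≥ N, a (n + 1) - a n ≤ δ) ∧
    ∀ ε : ℝ, (∀ n : ℕ, ∃ N : ℕ, N > n ∧ a (N + 1) - a N > ε) →
      Int.fract '' Ω ∩ Set.Ioo (1 - ε) 1 = ∅ :=
  footprint_large_element_eventual_gap_bound_general Ω a hadd hmono h0 hrange hone
end

section
/- Let Ω be a normalized ω-monoid (smallest nonzero element equal to 1) that is not a tempered monoid, and suppose its footprint Δ satisfies Δ \ {0} ≠ ∅. Then λ := inf(Δ \ {0}) equals μ := inf{1 − δ : δ ∈ Δ \ {0}}, and both infima are attained: λ ∈ Δ and 1 − μ ∈ Δ. -/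
/-!
If the nonzero fractional parts of elements of `Ω` came arbitrarily close to `0`, adding integers
to the multiples of one such element would fill every late interval of that length, forcing the
gaps of the enumeration to `0`. So they are bounded below by some `r > 0`; suitable multiples then
also keep them out of `(1 - r, 1)`, and pigeonhole on the multiples of any `x ∈ Ω` gives `q ≥ 1`
with `q x ∈ ℤ`. The element `(q - 1) x` makes the footprint symmetric under `δ ↦ 1 - δ`, whence
`λ = μ`, and closes its nonzero part under positive differences, which forces the positive
infimum `λ` to be attained.
-/

open Filter Topology Set

theorem IsCompact.exists_lt_dist_lt {X : Type*} [PseudoMetricSpace X] {K : Set X}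
    (hK : IsCompact K) {f : ℕ → X} (hf : ∀ n, f n ∈ K) {r : ℝ} (hr : 0 < r) :
    ∃ n m, n < m ∧ dist (f n) (f m) < r := by
  obtain ⟨_, -, φ, hφ, hlim⟩ := hK.tendsto_subseq hf
  obtain ⟨N, hN⟩ := Metric.cauchySeq_iff'.1 hlim.cauchySeq r hr
  exact ⟨φ N, φ (N + 1), hφ N.lt_succ_self, by simpa [dist_comm] using hN (N + 1) N.le_succ⟩

theorem tendsto_sub_zero_of_exists_mem_Ioc {a : ℕ → ℝ} (ha : StrictMono a)
    (h : ∀ ε > 0, ∃ T, ∀ t ≥ T, ∃ m, a m ∈ Ioc t (t + ε)) :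
    Tendsto (fun n => a (n + 1) - a n) atTop (𝓝 0) := by
  refine Metric.tendsto_atTop.2 fun ε hε => ?_
  obtain ⟨T, hT⟩ := h (ε / 2) (half_pos hε)
  obtain ⟨N, hN, -⟩ := hT T le_rfl
  refine ⟨N, fun n hn => ?_⟩
  obtain ⟨m, hnm, hmn⟩ := hT (a n) (hN.le.trans (ha.monotone hn))
  have hstep : a (n + 1) ≤ a m := ha.monotone (ha.lt_iff_lt.1 hnm)
  have hpos : a n < a (n + 1) := ha n.lt_succ_self
  rw [Real.dist_eq, abs_of_pos (by linarith)]
  linarith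

theorem csInf_mem_of_sub_mem {S : Set ℝ} (hne : S.Nonempty) (hbdd : BddBelow S)
    (hpos : 0 < sInf S) (hsub : ∀ x ∈ S, ∀ y ∈ S, y < x → x - y ∈ S) : sInf S ∈ S := by
  by_contra hnot
  have hlt : ∀ x ∈ S, sInf S < x := fun x hx =>
    (csInf_le hbdd hx).lt_of_ne fun h => hnot (h ▸ hx)
  obtain ⟨x, hx, hx2⟩ := exists_lt_of_csInf_lt hne (by linarith : sInf S < sInf S + sInf S)
  obtain ⟨y, hy, hyx⟩ := exists_lt_of_csInf_lt hne (hlt x hx)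
  linarith [csInf_le hbdd (hsub x hx y hy hyx), hlt y hy]

namespace AddSubmonoid

variable (M : AddSubmonoid ℝ)

theorem natCast_add_mul_fract_mem (h1 : (1 : ℝ) ∈ M) {x : ℝ} (hx : x ∈ M) (hx0 : 0 ≤ x)
    {j N : ℕ} (hjN : j * ⌊x⌋₊ ≤ N) : (N : ℝ) + j * Int.fract x ∈ M := by
  have h : (N : ℝ) + j * Int.fract x = j • x + (N - j * ⌊x⌋₊) • (1 : ℝ) := by
    rw [Int.fract, ← natCast_floor_eq_intCast_floor hx0, nsmul_eq_mul, nsmul_eq_mul,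
      Nat.cast_sub hjN]
    push_cast
    ring
  rw [h]
  exact add_mem (nsmul_mem hx j) (nsmul_mem h1 _)

/-- Once `t ≥ (1/δ + 1) ⌊x⌋`, the points `⌊t⌋ + jδ` with `δ = fract x` lie in `M`
and step through `(t, t + δ]`. -/
theorem exists_mem_Ioc_of_fract_pos_s10 (h1 : (1 : ℝ) ∈ M) {x : ℝ} (hx : x ∈ M) (hx0 : 0 ≤ x)
    (hδ : 0 < Int.fract x) : ∃ T, ∀ t ≥ T, ∃ y ∈ M, y ∈ Ioc t (t + Int.fract x) := by
  set δ := Int.fract x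
  refine ⟨(1 / δ + 1) * ⌊x⌋₊, fun t ht => ?_⟩
  have ht0 : 0 ≤ t := le_trans (by positivity) ht
  obtain ⟨m, hm, -⟩ := existsUnique_add_zsmul_mem_Ioc hδ (⌊t⌋₊ : ℝ) t
  rw [zsmul_eq_mul] at hm
  have hfl := Nat.floor_le ht0
  have hfl' := Nat.lt_floor_add_one t
  have hm0 : 0 < m := by
    have : (0 : ℝ) < m * δ := by linarith [hm.1]
    exact_mod_cast (pos_iff_pos_of_mul_pos this).2 hδ
  lift m to ℕ using hm0.le
  have hj : (m : ℝ) < 1 / δ + 1 := by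
    rw [div_add_one hδ.ne', lt_div_iff₀ hδ]
    push_cast at hm
    linarith [hm.2]
  have hjN : m * ⌊x⌋₊ ≤ ⌊t⌋₊ := by
    refine Nat.le_floor (le_trans ?_ ht)
    push_cast
    exact mul_le_mul_of_nonneg_right hj.le (Nat.cast_nonneg _)
  exact ⟨_, M.natCast_add_mul_fract_mem h1 hx hx0 hjN, by exact_mod_cast hm⟩

theorem exists_pos_le_fract (h1 : (1 : ℝ) ∈ M) (hM0 : ∀ x ∈ M, 0 ≤ x) {a : ℕ → ℝ}
    (ha : StrictMono a) (hrange : range a = M)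
    (hnt : ¬ Tendsto (fun n => a (n + 1) - a n) atTop (𝓝 0)) :
    ∃ r > 0, ∀ x ∈ M, Int.fract x ≠ 0 → r ≤ Int.fract x := by
  by_contra! h
  refine hnt (tendsto_sub_zero_of_exists_mem_Ioc ha fun ε hε => ?_)
  obtain ⟨x, hx, hx0, hxε⟩ := h ε hε
  obtain ⟨T, hT⟩ :=
    M.exists_mem_Ioc_of_fract_pos_s10 h1 hx (hM0 x hx) ((Int.fract_nonneg x).lt_of_ne' hx0)
  refine ⟨T, fun t ht => ?_⟩
  obtain ⟨y, hy, hyt⟩ := hT t ht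
  obtain ⟨m, rfl⟩ : y ∈ range a := hrange ▸ hy
  exact ⟨m, hyt.1, hyt.2.trans (by linarith)⟩

variable {M} {r : ℝ}

/-- If `fract x ∈ (1 - r, 1)`, a multiple `k • x` has fractional part `1 - k (1 - fract x)`
in `(0, 1 - fract x] ⊆ (0, r)`. -/
theorem fract_le_one_sub (hsep : ∀ x ∈ M, Int.fract x ≠ 0 → r ≤ Int.fract x) {x : ℝ}
    (hx : x ∈ M) (hx0 : Int.fract x ≠ 0) : Int.fract x ≤ 1 - r := by
  by_contra! hlt
  set η := 1 - Int.fract x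
  have hη : 0 < η := by linarith [Int.fract_lt_one x]
  have hηr : η < r := by linarith
  have hη1 : η < 1 := by linarith [hsep x hx hx0, Int.fract_lt_one x]
  obtain ⟨k, hk, -⟩ := existsUnique_sub_zsmul_mem_Ioc hη 1 0
  rw [zsmul_eq_mul, zero_add] at hk
  have hk0 : 0 ≤ k := by
    have : (0 : ℝ) < k * η := by linarith [hk.2]
    exact_mod_cast ((pos_iff_pos_of_mul_pos this).2 hη).le
  lift k to ℕ using hk0
  push_cast at hk
  have hfract : Int.fract (k • x) = 1 - k * η := by
    refine Int.fract_eq_iff.2 ⟨hk.1.le, by linarith [hk.2], k * ⌊x⌋ + k - 1, ?_⟩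
    simp only [η, Int.fract, nsmul_eq_mul]
    push_cast
    ring
  have := hsep _ (nsmul_mem hx k) (by rw [hfract]; exact hk.1.ne')
  linarith [hk.2]

/-- Pigeonhole on the fractional parts of the multiples of `x`: two of them are closer than `r`,
so the fractional part of their difference, lying in `{0} ∪ [r, 1 - r]`, is `0`. -/
theorem exists_fract_nsmul_eq_zero (hr : 0 < r)
    (hsep : ∀ x ∈ M, Int.fract x ≠ 0 → r ≤ Int.fract x) {x : ℝ} (hx : x ∈ M) :
    ∃ q : ℕ, 0 < q ∧ Int.fract (q • x) = 0 := by
  obtain ⟨n, m, hnm, hdist⟩ := isCompact_Icc.exists_lt_dist_lt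
    (f := fun n : ℕ => Int.fract (n • x))
    (fun n => ⟨Int.fract_nonneg _, (Int.fract_lt_one _).le⟩) hr
  refine ⟨m - n, by omega, ?_⟩
  by_contra hne
  have hmem := nsmul_mem hx (m - n)
  have hlow := hsep _ hmem hne
  have hhigh := fract_le_one_sub hsep hmem hne
  obtain ⟨z, hz⟩ : ∃ z : ℤ, Int.fract ((m - n) • x) - Int.fract (m • x) + Int.fract (n • x) = z :=
    ⟨⌊m • x⌋ - ⌊(m - n) • x⌋ - ⌊n • x⌋, by
      simp only [Int.fract, nsmul_eq_mul]
      push_cast [Nat.cast_sub hnm.le]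
      ring⟩
  rw [Real.dist_eq, abs_lt] at hdist
  have hz0 : (0 : ℝ) < z := by linarith [hdist.2]
  have hz1 : (z : ℝ) < 1 := by linarith [hdist.1]
  norm_cast at hz0 hz1
  omega

theorem one_sub_fract_mem (hr : 0 < r) (hsep : ∀ x ∈ M, Int.fract x ≠ 0 → r ≤ Int.fract x)
    {x : ℝ} (hx : x ∈ M) (hx0 : Int.fract x ≠ 0) : 1 - Int.fract x ∈ Int.fract '' M := by
  obtain ⟨q, hq, hqx⟩ := exists_fract_nsmul_eq_zero hr hsep hx
  refine ⟨(q - 1) • x, nsmul_mem hx _, ?_⟩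
  rw [← Int.fract_neg hx0]
  refine Int.fract_eq_fract.2 ⟨⌊q • x⌋, ?_⟩
  rw [Int.fract, sub_eq_zero] at hqx
  rw [← hqx, nsmul_eq_mul, nsmul_eq_mul, Nat.cast_sub hq]
  push_cast
  ring

theorem image_one_sub_footprint (hr : 0 < r)
    (hsep : ∀ x ∈ M, Int.fract x ≠ 0 → r ≤ Int.fract x) :
    (fun δ : ℝ => 1 - δ) '' (Int.fract '' M \ {0}) = Int.fract '' M \ {0} := by
  have hsub : (fun δ : ℝ => 1 - δ) '' (Int.fract '' M \ {0}) ⊆ Int.fract '' M \ {0} := by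
    rintro _ ⟨_, ⟨⟨x, hx, rfl⟩, hx0⟩, rfl⟩
    exact ⟨one_sub_fract_mem hr hsep hx hx0, sub_ne_zero.2 (Int.fract_lt_one x).ne'⟩
  exact hsub.antisymm fun δ hδ => ⟨1 - δ, hsub ⟨δ, hδ, rfl⟩, sub_sub_cancel 1 δ⟩

/-- For `z ∈ M` with `fract z = 1 - fract y`, `x + z` has fractional part `fract x - fract y`. -/
theorem sub_mem_footprint (hr : 0 < r) (hsep : ∀ x ∈ M, Int.fract x ≠ 0 → r ≤ Int.fract x)
    {u v : ℝ} (hu : u ∈ Int.fract '' M) (hv : v ∈ Int.fract '' M \ {0}) (hvu : v < u) :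
    u - v ∈ Int.fract '' M \ {0} := by
  obtain ⟨x, hx, rfl⟩ := hu
  obtain ⟨⟨y, hy, rfl⟩, hy0⟩ := hv
  obtain ⟨z, hz, hzy⟩ := one_sub_fract_mem hr hsep hy hy0
  refine ⟨⟨x + z, add_mem hx hz, Int.fract_eq_iff.2 ⟨by linarith, ?_, ⌊x⌋ + ⌊z⌋ + 1, ?_⟩⟩,
    sub_ne_zero.2 hvu.ne'⟩
  · linarith [Int.fract_lt_one x, Int.fract_nonneg y]
  · push_cast
    linarith [Int.floor_add_fract x, Int.floor_add_fract z]

end AddSubmonoid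

theorem footprint_infima_equal_and_attained_general
    (Ω : Set ℝ) (a : ℕ → ℝ)
    (hadd : ∀ x ∈ Ω, ∀ y ∈ Ω, x + y ∈ Ω)
    (hmono : StrictMono a) (h0 : a 0 = 0) (hrange : Set.range a = Ω)
    (hone : 1 ∈ Ω)
    (hnt : ¬ Tendsto (fun n => a (n + 1) - a n) atTop (𝓝 0))
    (hne : (Int.fract '' Ω \ {0}).Nonempty) :
    sInf (Int.fract '' Ω \ {0}) = sInf ((fun δ => 1 - δ) '' (Int.fract '' Ω \ {0})) ∧
      sInf (Int.fract '' Ω \ {0}) ∈ Int.fract '' Ω ∧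
      1 - sInf ((fun δ => 1 - δ) '' (Int.fract '' Ω \ {0})) ∈ Int.fract '' Ω := by
  let M : AddSubmonoid ℝ :=
    { carrier := Ω, add_mem' := fun hx hy => hadd _ hx _ hy, zero_mem' := hrange ▸ ⟨0, h0⟩ }
  have hM0 : ∀ x ∈ M, 0 ≤ x := by
    intro x hx
    obtain ⟨n, rfl⟩ : x ∈ range a := hrange ▸ hx
    exact h0 ▸ hmono.monotone n.zero_le
  obtain ⟨r, hr, hsep⟩ := M.exists_pos_le_fract hone hM0 hmono hrange hnt
  set S := Int.fract '' Ω \ {0}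
  have hbdd : BddBelow S := ⟨0, fun _ ⟨⟨x, _, hx⟩, _⟩ => hx ▸ Int.fract_nonneg x⟩
  have hpos : 0 < sInf S :=
    hr.trans_le (le_csInf hne fun _ ⟨⟨x, hx, hδ⟩, h⟩ => hδ ▸ hsep x hx (hδ ▸ h))
  have hmem : sInf S ∈ S := csInf_mem_of_sub_mem hne hbdd hpos fun u hu v hv hvu =>
    AddSubmonoid.sub_mem_footprint hr hsep hu.1 hv hvu
  have hsymm : (fun δ => 1 - δ) '' S = S := AddSubmonoid.image_one_sub_footprint hr hsep
  have hone_sub : 1 - sInf S ∈ S := hsymm.subset (mem_image_of_mem _ hmem)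
  rw [hsymm]
  exact ⟨rfl, hmem.1, hone_sub.1⟩

/-- For a normalized non-tempered ω-monoid with nontrivial footprint `Δ`, the infimum
`λ` of `Δ \ {0}` equals the infimum `μ` of `{1 - δ : δ ∈ Δ \ {0}}`, and both infima are
attained: `λ ∈ Δ` and `1 - μ ∈ Δ`. -/
theorem footprint_infima_equal_and_attained
    (Ω : Set ℝ) (a : ℕ → ℝ)
    (hadd : ∀ x ∈ Ω, ∀ y ∈ Ω, x + y ∈ Ω)
    (hmono : StrictMono a) (h0 : a 0 = 0) (hrange : Set.range a = Ω)
    (hone : 1 ∈ Ω) (hnorm : ∀ x ∈ Ω, x ≠ 0 → 1 ≤ x)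
    (hnt : ¬ Tendsto (fun n => a (n + 1) - a n) atTop (𝓝 0))
    (hne : (Int.fract '' Ω \ {0}).Nonempty) :
    sInf (Int.fract '' Ω \ {0}) = sInf ((fun δ => 1 - δ) '' (Int.fract '' Ω \ {0})) ∧
      sInf (Int.fract '' Ω \ {0}) ∈ Int.fract '' Ω ∧
      1 - sInf ((fun δ => 1 - δ) '' (Int.fract '' Ω \ {0})) ∈ Int.fract '' Ω :=
  footprint_infima_equal_and_attained_general Ω a hadd hmono h0 hrange hone hnt hne
end

section
/- The Pythagorean monoid P = {i + j·log₂ 3 : i, j ∈ ℕ} is a tempered monoid: it contains 0, is closed under addition, P ∩ [0, x] is finite for every real x (so P admits a strictly increasing enumeration (a_n) with a(0) = 0), and a(n+1) − a(n) → 0 as n → ∞. -/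
/-!
As `log₂ 3 > 0`, `P = ℕ + ℕ·log₂ 3` meets every half-line `(-∞, x]` in a finite set, so it is
enumerated increasingly from `0`. As `log₂ 3` is irrational (`2ᵖ = 3^q` is impossible),
`ℤ + ℤ·log₂ 3` is dense in `ℝ`, so `P` contains `b < a` with `a - b < ε`. Once `N (a - b) ≥ 1`,
the sums `(N - k) b + k a + m` with `0 ≤ k ≤ N`, `m ∈ ℕ` lie in `P` and are `(a - b)`-dense in
`[N b, ∞)`, so the gaps of the enumeration eventually drop below `ε`.
-/
open Filter Topology Set

theorem irrational_logb_of_coprime {m n : ℕ} (hm : 1 < m) (hn : 1 < n) (hmn : m.Coprime n) :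
    Irrational (Real.logb m n) := by
  rintro ⟨q, hq⟩
  have hq_pos : 0 < q := by
    have : (0 : ℝ) < q := hq ▸ Real.logb_pos (by exact_mod_cast hm) (by exact_mod_cast hn)
    exact_mod_cast this
  have h_pow : (m : ℝ) ^ q.num.natAbs = (n : ℝ) ^ q.den := by
    have h_num : (q.num.natAbs : ℝ) = q * q.den := by
      rw [Nat.cast_natAbs, abs_of_pos (Rat.num_pos.2 hq_pos)]
      exact_mod_cast (Rat.mul_den_eq_num q).symm
    rw [← Real.rpow_natCast, h_num, Real.rpow_mul (by positivity), hq,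
      Real.rpow_logb (by positivity) (by exact_mod_cast hm.ne') (by positivity),
      Real.rpow_natCast]
  have h_self : (n ^ q.den).Coprime (n ^ q.den) := by
    have h_pow' : m ^ q.num.natAbs = n ^ q.den := by exact_mod_cast h_pow
    simpa [h_pow'] using hmn.pow q.num.natAbs q.den
  rw [Nat.coprime_self, Nat.pow_eq_one] at h_self
  exact h_self.elim hn.ne' q.den_ne_zero

section Enumeration

variable {α : Type*} [LinearOrder α]

theorem exists_strictMono_range_eq_of_isLeast {S : Set α} {x₀ : α} (h₀ : IsLeast S x₀)
    (hfin : ∀ x, (S ∩ Iic x).Finite) (hmax : ∀ x ∈ S, ∃ y ∈ S, x < y) :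
    ∃ a : ℕ → α, StrictMono a ∧ a 0 = x₀ ∧ range a = S := by
  let _ : LocallyFiniteOrder S := LocallyFiniteOrder.ofFiniteIcc fun x y =>
    ((hfin y).preimage Subtype.val_injective.injOn).subset fun z hz => ⟨z.2, hz.2⟩
  let _ : SuccOrder S := LinearLocallyFiniteOrder.succOrder S
  let _ : PredOrder S := LinearLocallyFiniteOrder.predOrder S
  let _ : OrderBot S := { bot := ⟨x₀, h₀.1⟩, bot_le := fun z => h₀.2 z.2 }
  have : NoMaxOrder S := ⟨fun z => let ⟨y, hy, hzy⟩ := hmax z z.2; ⟨⟨y, hy⟩, hzy⟩⟩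
  let e : ℕ ≃o S := orderIsoNatOfLinearSuccPredArch.symm
  refine ⟨fun n => e n, (Subtype.strictMono_coe _).comp e.strictMono, ?_, ?_⟩
  · exact congrArg Subtype.val e.map_bot
  · rw [range_comp' Subtype.val e, e.range_eq, image_univ, Subtype.range_coe]

theorem tendsto_atTop_of_injective_of_finite_Iic {a : ℕ → α} (ha : a.Injective)
    (hfin : ∀ x, (range a ∩ Iic x).Finite) : Tendsto a atTop atTop := by
  refine tendsto_atTop.2 fun x => ?_
  rw [← Nat.cofinite_eq_atTop]
  refine ((hfin x).preimage ha.injOn).subset fun n hn => ⟨mem_range_self n, ?_⟩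
  exact (not_le.1 hn).le

end Enumeration

theorem tendsto_succ_sub_nhds_zero_of_eventually_dense {a : ℕ → ℝ} (ha : StrictMono a)
    (h_top : Tendsto a atTop atTop)
    (h_dense : ∀ ε > 0, ∀ᶠ y in atTop, ∃ p ∈ range a, p ∈ Ioc y (y + ε)) :
    Tendsto (fun n => a (n + 1) - a n) atTop (𝓝 0) := by
  refine tendsto_order.2 ⟨fun δ hδ => Eventually.of_forall fun n =>
    hδ.trans (sub_pos.2 (ha n.lt_succ_self)), fun ε hε => ?_⟩
  filter_upwards [h_top.eventually (h_dense (ε / 2) (half_pos hε))]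
    with n ⟨_, ⟨m, rfl⟩, h_gt, h_le⟩
  have h_succ_le : a (n + 1) ≤ a m := ha.monotone (ha.lt_iff_lt.1 h_gt)
  linarith

theorem AddSubmonoid.eventually_exists_mem_Ioc_s15 {M : AddSubmonoid ℝ} (h_one : (1 : ℝ) ∈ M)
    {a b : ℝ} (ha : a ∈ M) (hb : b ∈ M) (hba : b < a) :
    ∀ᶠ y in atTop, ∃ p ∈ M, p ∈ Ioc y (y + (a - b)) := by
  set d := a - b
  have hd : 0 < d := sub_pos.2 hba
  set N := ⌈1 / d⌉₊
  filter_upwards [eventually_ge_atTop (N * b)] with y hy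
  -- Write `y = N b + m + r` with `m ∈ ℕ`, `0 ≤ r < 1`, and step from `N b + m` by `k ≤ N`
  -- multiples of `d`: `N b + m + k d = m + (N - k) b + k a`.
  set m := ⌊y - N * b⌋₊
  set r := y - N * b - m
  have hr₀ : 0 ≤ r := sub_nonneg.2 (Nat.floor_le (sub_nonneg.2 hy))
  have hr₁ : r < 1 := by have := Nat.lt_floor_add_one (y - N * b); simp only [r]; linarith
  set k := ⌊r / d⌋₊ + 1
  have hkN : k ≤ N := by
    refine Nat.succ_le_of_lt ((Nat.floor_lt (div_nonneg hr₀ hd.le)).2 ?_)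
    calc r / d < 1 / d := div_lt_div_of_pos_right hr₁ hd
      _ ≤ N := Nat.le_ceil _
  have hkd_gt : r < k * d := by
    have := Nat.lt_floor_add_one (r / d)
    rw [div_lt_iff₀ hd] at this
    push_cast [k]; linarith
  have hkd_le : k * d ≤ r + d := by
    have := Nat.floor_le (div_nonneg hr₀ hd.le)
    rw [le_div_iff₀ hd] at this
    push_cast [k]; linarith
  refine ⟨m • (1 : ℝ) + (N - k) • b + k • a, add_mem (add_mem (nsmul_mem h_one m)
    (nsmul_mem hb _)) (nsmul_mem ha k), ?_⟩
  have hp : m • (1 : ℝ) + (N - k) • b + k • a = y + (k * d - r) := by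
    simp only [nsmul_eq_mul, Nat.cast_sub hkN, mul_one, r, d]; ring
  rw [hp]
  constructor <;> linarith

def natAddNatMul (α : ℝ) : AddSubmonoid ℝ where
  carrier := {x | ∃ i j : ℕ, x = i + j * α}
  add_mem' := by
    rintro _ _ ⟨i, j, rfl⟩ ⟨i', j', rfl⟩
    exact ⟨i + i', j + j', by push_cast; ring⟩
  zero_mem' := ⟨0, 0, by simp⟩

section natAddNatMul

variable {α : ℝ}

theorem one_mem_natAddNatMul : (1 : ℝ) ∈ natAddNatMul α := ⟨1, 0, by simp⟩

theorem isLeast_zero_natAddNatMul (hα : 0 ≤ α) : IsLeast (natAddNatMul α : Set ℝ) 0 := by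
  refine ⟨zero_mem _, ?_⟩
  rintro _ ⟨i, j, rfl⟩
  positivity

theorem finite_natAddNatMul_inter_Iic (hα : 0 < α) (x : ℝ) :
    ((natAddNatMul α : Set ℝ) ∩ Iic x).Finite := by
  refine (((finite_Iic ⌊x⌋₊).prod (finite_Iic ⌊x / α⌋₊)).image
    fun p : ℕ × ℕ => (p.1 : ℝ) + p.2 * α).subset ?_
  rintro _ ⟨⟨i, j, rfl⟩, hx⟩
  have hjα : 0 ≤ (j : ℝ) * α := by positivity
  refine ⟨(i, j), ⟨Nat.le_floor ?_, Nat.le_floor ?_⟩, rfl⟩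
  · linarith [mem_Iic.1 hx]
  · rw [le_div_iff₀ hα]
    linarith [mem_Iic.1 hx, (Nat.cast_nonneg i : (0 : ℝ) ≤ i)]

theorem exists_mem_natAddNatMul_sub_mem_Ioo (hα : Irrational α) {ε : ℝ} (hε : 0 < ε) :
    ∃ a ∈ natAddNatMul α, ∃ b ∈ natAddNatMul α, a - b ∈ Ioo 0 ε := by
  have h_dense : Dense (AddSubgroup.closure {α, 1} : Set ℝ) :=
    dense_addSubgroupClosure_pair_iff.2 (by rwa [div_one])
  obtain ⟨_, hg, hg_pos, hg_lt⟩ := h_dense.exists_mem_open isOpen_Ioo (nonempty_Ioo.2 hε)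
  obtain ⟨j, i, rfl⟩ := AddSubgroup.mem_closure_pair.1 hg
  have h_split (z : ℤ) : (z : ℝ) = z.toNat - (-z).toNat := by
    exact_mod_cast (Int.toNat_sub_toNat_neg z).symm
  refine ⟨i.toNat + j.toNat * α, ⟨_, _, rfl⟩, (-i).toNat + (-j).toNat * α, ⟨_, _, rfl⟩, ?_⟩
  have h_diff :
      (i.toNat + j.toNat * α) - ((-i).toNat + (-j).toNat * α) = j • α + i • (1 : ℝ) := by
    rw [zsmul_eq_mul, zsmul_eq_mul, h_split i, h_split j]; ring
  rw [h_diff]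
  exact ⟨hg_pos, hg_lt⟩

theorem eventually_exists_mem_natAddNatMul_Ioc (hα : Irrational α) {ε : ℝ} (hε : 0 < ε) :
    ∀ᶠ y in atTop, ∃ p ∈ natAddNatMul α, p ∈ Ioc y (y + ε) := by
  obtain ⟨a, ha, b, hb, hab_pos, hab⟩ := exists_mem_natAddNatMul_sub_mem_Ioo hα hε
  have h_dense := AddSubmonoid.eventually_exists_mem_Ioc_s15 one_mem_natAddNatMul ha hb
    (sub_pos.1 hab_pos)
  filter_upwards [h_dense] with y ⟨p, hp, hpy, hpy'⟩
  exact ⟨p, hp, hpy, by linarith⟩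

end natAddNatMul

/-- The Pythagorean monoid `P = {i + j·log₂ 3 : i, j ∈ ℕ}` is a tempered monoid. -/
theorem pythagorean_monoid_is_tempered :
    (0 : ℝ) ∈ {x : ℝ | ∃ i j : ℕ, x = (i : ℝ) + (j : ℝ) * Real.logb 2 3} ∧
    (∀ x ∈ {x : ℝ | ∃ i j : ℕ, x = (i : ℝ) + (j : ℝ) * Real.logb 2 3},
      ∀ y ∈ {x : ℝ | ∃ i j : ℕ, x = (i : ℝ) + (j : ℝ) * Real.logb 2 3},
        x + y ∈ {x : ℝ | ∃ i j : ℕ, x = (i : ℝ) + (j : ℝ) * Real.logb 2 3}) ∧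
    (∀ x : ℝ, ({x : ℝ | ∃ i j : ℕ, x = (i : ℝ) + (j : ℝ) * Real.logb 2 3} ∩
      Set.Icc 0 x).Finite) ∧
    ∃ a : ℕ → ℝ, StrictMono a ∧ a 0 = 0 ∧
      Set.range a = {x : ℝ | ∃ i j : ℕ, x = (i : ℝ) + (j : ℝ) * Real.logb 2 3} ∧
      Tendsto (fun n => a (n + 1) - a n) atTop (𝓝 0) := by
  set P := natAddNatMul (Real.logb 2 3)
  have h_coe : {x : ℝ | ∃ i j : ℕ, x = i + j * Real.logb 2 3} = P := rfl
  rw [h_coe]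
  have h_pos : 0 < Real.logb 2 3 := Real.logb_pos one_lt_two (by norm_num)
  have h_irr : Irrational (Real.logb 2 3) := by
    exact_mod_cast irrational_logb_of_coprime (m := 2) (n := 3) one_lt_two (by norm_num)
      (by norm_num)
  have h_fin := finite_natAddNatMul_inter_Iic h_pos
  obtain ⟨a, ha_mono, ha_zero, ha_range⟩ := exists_strictMono_range_eq_of_isLeast
    (isLeast_zero_natAddNatMul h_pos.le) h_fin
    fun x hx => ⟨x + 1, add_mem hx one_mem_natAddNatMul, lt_add_one x⟩
  refine ⟨zero_mem P, fun x hx y hy => add_mem hx hy,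
    fun x => (h_fin x).subset (inter_subset_inter_right _ Icc_subset_Iic_self),
    a, ha_mono, ha_zero, ha_range, ?_⟩
  refine tendsto_succ_sub_nhds_zero_of_eventually_dense ha_mono
    (tendsto_atTop_of_injective_of_finite_Iic ha_mono.injective (ha_range ▸ h_fin)) ?_
  intro ε hε
  simpa only [ha_range, SetLike.mem_coe] using eventually_exists_mem_natAddNatMul_Ioc h_irr hε
end

section
/- The set Q = {0} ∪ {n + k/2^(n+1) : n ∈ ℕ, n ≥ 1, 0 ≤ k ≤ 2^(n+1) − 1} is a tempered monoid: it contains 0, is closed under addition, Q ∩ [0, x] is finite for every real x (so Q admits a strictly increasing enumeration (a_n) with a(0) = 0), and a(n+1) − a(n) → 0 as n → ∞. -/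
/-!
A nonzero `x ∈ Q` is exactly a real `x ≥ 1` for which `2 ^ (⌊x⌋ + 1) * x` is an integer. For
`x, y ≥ 1` the exponent `⌊x + y⌋ + 1` dominates both `⌊x⌋ + 1` and `⌊y⌋ + 1`, so `Q` is closed
under addition.

In increasing order, `Q` runs through each block `[n, n + 1)` in `2 ^ (n + 1)` steps of length
`2 ^ -(n + 1)`. In closed form, its `i`-th element (`i ≥ 1`) is `dyadicLog (i + 3) - 2`, where
`dyadicLog` interpolates `j ↦ log₂ j + 1` linearly on every dyadic block `[2 ^ m, 2 ^ (m + 1)]`;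
its increments `2 ^ -⌊log₂ j⌋` tend to `0`.
-/

open Filter Topology

lemma exists_nat_eq_mul_two_pow_of_le {x : ℝ} {p q : ℕ} (hx : ∃ z : ℕ, x * 2 ^ p = z)
    (hpq : p ≤ q) : ∃ z : ℕ, x * 2 ^ q = z := by
  obtain ⟨z, hz⟩ := hx
  refine ⟨z * 2 ^ (q - p), ?_⟩
  rw [← Nat.add_sub_cancel' hpq, pow_add, Nat.add_sub_cancel_left, ← mul_assoc, hz]
  push_cast
  rfl

lemma tendsto_natLog_atTop {b : ℕ} (hb : 1 < b) : Tendsto (Nat.log b) atTop atTop :=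
  Nat.log_monotone.tendsto_atTop_atTop fun n => ⟨b ^ n, (Nat.log_pow hb n).ge⟩

lemma finite_range_inter_Iic_of_tendsto_atTop {α : Type*} [LinearOrder α] [NoMaxOrder α]
    {a : ℕ → α} (ha : Tendsto a atTop atTop) (x : α) : (Set.range a ∩ Set.Iic x).Finite := by
  have hfin : {i | a i ≤ x}.Finite := by
    simpa using eventually_cofinite.1
      (Nat.cofinite_eq_atTop ▸ ha.eventually_gt_atTop x : ∀ᶠ i in cofinite, x < a i)
  refine (hfin.image a).subset ?_
  rintro _ ⟨⟨i, rfl⟩, hi⟩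
  exact ⟨i, hi, rfl⟩

def quarters : Set ℝ :=
  {0} ∪ {x : ℝ | ∃ n k : ℕ, 1 ≤ n ∧ k ≤ 2 ^ (n + 1) - 1 ∧ x = (n : ℝ) + (k : ℝ) / 2 ^ (n + 1)}

lemma mem_quarters_iff {x : ℝ} :
    x ∈ quarters ↔ x = 0 ∨ 1 ≤ x ∧ ∃ z : ℕ, x * 2 ^ (⌊x⌋₊ + 1) = z := by
  refine or_congr Iff.rfl ⟨?_, ?_⟩
  · rintro ⟨n, k, hn, hk, rfl⟩
    have hpow : (0 : ℝ) < 2 ^ (n + 1) := by positivity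
    have hfrac : (k : ℝ) / 2 ^ (n + 1) < 1 := by
      rw [div_lt_one hpow]
      exact_mod_cast (show k < 2 ^ (n + 1) by have := Nat.one_le_two_pow (n := n + 1); omega)
    have hfloor : ⌊(n : ℝ) + k / 2 ^ (n + 1)⌋₊ = n :=
      (Nat.floor_eq_iff (by positivity)).2 ⟨by simp; positivity, by linarith⟩
    refine ⟨le_add_of_le_of_nonneg (by exact_mod_cast hn) (by positivity),
      n * 2 ^ (n + 1) + k, ?_⟩
    rw [hfloor]
    push_cast
    field_simp
  · rintro ⟨hx, z, hz⟩
    set n := ⌊x⌋₊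
    have hpow : (0 : ℝ) < 2 ^ (n + 1) := by positivity
    have hlo : ((n * 2 ^ (n + 1) : ℕ) : ℝ) ≤ z := by
      rw [← hz]; push_cast
      exact mul_le_mul_of_nonneg_right (Nat.floor_le (by linarith)) hpow.le
    have hhi : (z : ℝ) < ((n * 2 ^ (n + 1) + 2 ^ (n + 1) : ℕ) : ℝ) := by
      rw [← hz]; push_cast
      nlinarith [Nat.lt_floor_add_one x]
    have hlo' : n * 2 ^ (n + 1) ≤ z := by exact_mod_cast hlo
    have hhi' : z < n * 2 ^ (n + 1) + 2 ^ (n + 1) := by exact_mod_cast hhi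
    refine ⟨n, z - n * 2 ^ (n + 1), (Nat.one_le_floor_iff x).2 hx, by omega, ?_⟩
    rw [Nat.cast_sub hlo', ← hz]
    push_cast
    field_simp
    ring

lemma add_mem_quarters {x y : ℝ} (hx : x ∈ quarters) (hy : y ∈ quarters) :
    x + y ∈ quarters := by
  rcases mem_quarters_iff.1 hx with rfl | ⟨hx1, hxz⟩
  · simpa using hy
  rcases mem_quarters_iff.1 hy with rfl | ⟨hy1, hyz⟩
  · simpa using hx
  have hfloor_x : ⌊x⌋₊ ≤ ⌊x + y⌋₊ := Nat.floor_mono (by linarith)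
  have hfloor_y : ⌊y⌋₊ ≤ ⌊x + y⌋₊ := Nat.floor_mono (by linarith)
  obtain ⟨zx, hzx⟩ := exists_nat_eq_mul_two_pow_of_le hxz (Nat.succ_le_succ hfloor_x)
  obtain ⟨zy, hzy⟩ := exists_nat_eq_mul_two_pow_of_le hyz (Nat.succ_le_succ hfloor_y)
  refine mem_quarters_iff.2 (Or.inr ⟨by linarith, zx + zy, ?_⟩)
  rw [add_mul, hzx, hzy]
  push_cast
  rfl

noncomputable def dyadicLog (j : ℕ) : ℝ := Nat.log 2 j + j / 2 ^ Nat.log 2 j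

lemma dyadicLog_two_pow_add {m k : ℕ} (hk : k < 2 ^ m) :
    dyadicLog (2 ^ m + k) = m + 1 + k / 2 ^ m := by
  have hlog : Nat.log 2 (2 ^ m + k) = m :=
    Nat.log_eq_of_pow_le_of_lt_pow (by omega) (by rw [pow_succ]; omega)
  rw [dyadicLog, hlog]
  push_cast
  field_simp
  ring

lemma dyadicLog_two_pow (m : ℕ) : dyadicLog (2 ^ m) = m + 1 := by
  simpa using dyadicLog_two_pow_add (m := m) (k := 0) (by positivity)

lemma dyadicLog_succ_sub (j : ℕ) : dyadicLog (j + 1) - dyadicLog j = (2 ^ Nat.log 2 j)⁻¹ := by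
  rcases Nat.eq_zero_or_pos j with rfl | hj
  · simp [dyadicLog]
  set m := Nat.log 2 j
  have hle : 2 ^ m ≤ j := Nat.pow_log_le_self 2 hj.ne'
  have hlt : j < 2 ^ (m + 1) := Nat.lt_pow_succ_log_self (by norm_num) j
  clear_value m
  obtain ⟨k, rfl⟩ := Nat.exists_eq_add_of_le hle
  rw [dyadicLog_two_pow_add (show k < 2 ^ m by rw [pow_succ] at hlt; omega)]
  rcases Nat.lt_or_ge (k + 1) (2 ^ m) with hk | hk
  · rw [add_assoc, dyadicLog_two_pow_add hk]
    push_cast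
    field_simp
    ring
  · have hk' : k + 1 = 2 ^ m := by rw [pow_succ] at hlt; omega
    have hk'' : (k : ℝ) = 2 ^ m - 1 := by
      rw [eq_sub_iff_add_eq]; exact_mod_cast hk'
    rw [show 2 ^ m + k + 1 = 2 ^ (m + 1) by rw [pow_succ]; omega, dyadicLog_two_pow, hk'']
    push_cast
    field_simp
    ring

lemma strictMono_dyadicLog : StrictMono dyadicLog :=
  strictMono_nat_of_lt_succ fun j => by
    rw [← sub_pos, dyadicLog_succ_sub]
    positivity

lemma tendsto_dyadicLog_atTop : Tendsto dyadicLog atTop atTop :=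
  tendsto_atTop_mono (fun j => le_add_of_nonneg_right (by positivity))
    (tendsto_natCast_atTop_atTop.comp (tendsto_natLog_atTop one_lt_two))

lemma tendsto_dyadicLog_succ_sub :
    Tendsto (fun j => dyadicLog (j + 1) - dyadicLog j) atTop (𝓝 0) := by
  simp_rw [dyadicLog_succ_sub]
  exact tendsto_inv_atTop_zero.comp ((tendsto_pow_atTop_atTop_of_one_lt one_lt_two).comp
    (tendsto_natLog_atTop one_lt_two))

noncomputable def quartersEnum : ℕ → ℝ
  | 0 => 0
  | i + 1 => dyadicLog (i + 4) - 2

lemma strictMono_quartersEnum : StrictMono quartersEnum := by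
  refine strictMono_nat_of_lt_succ fun i => ?_
  cases i with
  | zero =>
    rw [quartersEnum, quartersEnum, show 0 + 4 = 2 ^ 2 by norm_num, dyadicLog_two_pow]
    norm_num
  | succ i => exact sub_lt_sub_right (strictMono_dyadicLog (by omega)) 2

lemma tendsto_quartersEnum_succ_sub :
    Tendsto (fun i => quartersEnum (i + 1) - quartersEnum i) atTop (𝓝 0) := by
  rw [← tendsto_add_atTop_iff_nat 1]
  refine (tendsto_dyadicLog_succ_sub.comp (tendsto_add_atTop_nat 4)).congr fun i => ?_
  simp only [Function.comp, quartersEnum]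
  ring_nf

lemma tendsto_quartersEnum_atTop : Tendsto quartersEnum atTop atTop := by
  rw [← tendsto_add_atTop_iff_nat 1]
  exact tendsto_atTop_add_const_right _ (-2)
    (tendsto_dyadicLog_atTop.comp (tendsto_add_atTop_nat 4))

lemma range_quartersEnum : Set.range quartersEnum = quarters := by
  ext x
  constructor
  · rintro ⟨_ | i, rfl⟩
    · exact Or.inl rfl
    set m := Nat.log 2 (i + 4)
    have hle : 2 ^ m ≤ i + 4 := Nat.pow_log_le_self 2 (by omega)
    have hlt : i + 4 < 2 ^ (m + 1) := Nat.lt_pow_succ_log_self (by norm_num) _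
    have hm : 2 ≤ m := Nat.le_log_of_pow_le (by norm_num) (by omega)
    clear_value m
    obtain ⟨n, rfl⟩ := Nat.exists_eq_add_of_le' hm
    obtain ⟨k, hk⟩ := Nat.exists_eq_add_of_le hle
    have hk_lt : k < 2 ^ (n + 2) := by rw [pow_succ] at hlt; omega
    refine Or.inr ⟨n + 1, k, by omega, show k ≤ 2 ^ (n + 2) - 1 by omega, ?_⟩
    rw [quartersEnum, hk, dyadicLog_two_pow_add hk_lt]
    push_cast
    ring_nf
  · rintro (rfl | ⟨n, k, hn, hk, rfl⟩)
    · exact ⟨0, rfl⟩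
    have h4 : 4 ≤ 2 ^ (n + 1) := by
      calc 4 = 2 ^ 2 := by norm_num
        _ ≤ 2 ^ (n + 1) := Nat.pow_le_pow_right (by norm_num) (by omega)
    refine ⟨2 ^ (n + 1) + k - 4 + 1, ?_⟩
    rw [quartersEnum, show 2 ^ (n + 1) + k - 4 + 4 = 2 ^ (n + 1) + k by omega,
      dyadicLog_two_pow_add (by omega)]
    push_cast
    ring

/-- The set `Q = {0} ∪ {n + k/2^(n+1) : n ≥ 1, 0 ≤ k ≤ 2^(n+1) - 1}` is a tempered
monoid. -/
theorem quarters_monoid_is_tempered :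
    (0 : ℝ) ∈ {0} ∪ {x : ℝ | ∃ n k : ℕ, 1 ≤ n ∧ k ≤ 2 ^ (n + 1) - 1 ∧
        x = (n : ℝ) + (k : ℝ) / 2 ^ (n + 1)} ∧
    (∀ x ∈ ({0} ∪ {x : ℝ | ∃ n k : ℕ, 1 ≤ n ∧ k ≤ 2 ^ (n + 1) - 1 ∧
        x = (n : ℝ) + (k : ℝ) / 2 ^ (n + 1)} : Set ℝ),
      ∀ y ∈ ({0} ∪ {x : ℝ | ∃ n k : ℕ, 1 ≤ n ∧ k ≤ 2 ^ (n + 1) - 1 ∧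
        x = (n : ℝ) + (k : ℝ) / 2 ^ (n + 1)} : Set ℝ),
        x + y ∈ ({0} ∪ {x : ℝ | ∃ n k : ℕ, 1 ≤ n ∧ k ≤ 2 ^ (n + 1) - 1 ∧
          x = (n : ℝ) + (k : ℝ) / 2 ^ (n + 1)} : Set ℝ)) ∧
    (∀ x : ℝ, (({0} ∪ {x : ℝ | ∃ n k : ℕ, 1 ≤ n ∧ k ≤ 2 ^ (n + 1) - 1 ∧
        x = (n : ℝ) + (k : ℝ) / 2 ^ (n + 1)} : Set ℝ) ∩ Set.Icc 0 x).Finite) ∧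
    ∃ a : ℕ → ℝ, StrictMono a ∧ a 0 = 0 ∧
      Set.range a = ({0} ∪ {x : ℝ | ∃ n k : ℕ, 1 ≤ n ∧ k ≤ 2 ^ (n + 1) - 1 ∧
        x = (n : ℝ) + (k : ℝ) / 2 ^ (n + 1)} : Set ℝ) ∧
      Tendsto (fun n => a (n + 1) - a n) atTop (𝓝 0) := by
  change 0 ∈ quarters ∧ (∀ x ∈ quarters, ∀ y ∈ quarters, x + y ∈ quarters) ∧
    (∀ x, (quarters ∩ Set.Icc 0 x).Finite) ∧ ∃ a : ℕ → ℝ, StrictMono a ∧ a 0 = 0 ∧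
      Set.range a = quarters ∧ Tendsto (fun n => a (n + 1) - a n) atTop (𝓝 0)
  refine ⟨Or.inl rfl, fun x hx y hy => add_mem_quarters hx hy, fun x => ?_,
    quartersEnum, strictMono_quartersEnum, rfl, range_quartersEnum,
    tendsto_quartersEnum_succ_sub⟩
  rw [← range_quartersEnum]
  exact (finite_range_inter_Iic_of_tendsto_atTop tendsto_quartersEnum_atTop x).subset
    (Set.inter_subset_inter_right _ Set.Icc_subset_Iic_self)
end

section
/- The well-tempered harmonic semigroup H = {0, 12, 19, 24, 28, 31, 34, 36, 38, 40, 42, 43, 45, 46, 47, 48} ∪ {n ∈ ℕ : n > 48} satisfies H = {⌊12·log₂ n + 0.6⌋ : n ∈ ℕ, n ≥ 1}, i.e., H is exactly the image of the logarithmic monoid L = {log₂ n : n ≥ 1} under the map x ↦ ⌊12x + 0.6⌋. -/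
/-!
Writing `12 log₂ n + 3/5 = log₂ (8 n⁶⁰) / 5` turns the map into the natural-number function
`n ↦ ⌊log₂ (8 n⁶⁰)⌋ / 5`, whose values at `n = 1, …, 16` are computed directly. It is monotone,
takes the value `12 k` at `2 ^ k`, and from `n = 17` on it increases by at most one per step,
because `(18 / 17)⁶⁰ < 2⁵`. So on `n ≥ 17` it starts at `49` and takes every larger value.
-/

open Real

def temperedHarmonic (n : ℕ) : ℕ := Nat.log 2 (8 * n ^ 60) / 5

theorem floor_twelve_mul_logb_two_add (n : ℕ) :
    ⌊12 * logb 2 n + 0.6⌋ = temperedHarmonic n := by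
  rcases Nat.eq_zero_or_pos n with rfl | hn
  · norm_num [temperedHarmonic]
  have hlog : 12 * logb 2 n + 0.6 = logb 2 ((8 * n ^ 60 : ℕ) : ℝ) / (5 : ℕ) := by
    have h8 : logb 2 8 = 3 := by
      rw [show (8 : ℝ) = 2 ^ (3 : ℕ) by norm_num, logb_pow, logb_self_eq_one one_lt_two]
      norm_num
    push_cast
    rw [logb_mul (by norm_num) (by positivity), logb_pow, h8]
    ring
  rw [hlog, Int.floor_div_natCast, ← Nat.cast_ofNat, floor_logb_natCast (by positivity),
    Int.log_natCast, temperedHarmonic]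
  norm_cast

theorem temperedHarmonic_mono : Monotone temperedHarmonic := fun _ _ h =>
  Nat.div_le_div_right (Nat.log_mono_right (by gcongr))

theorem temperedHarmonic_two_pow (k : ℕ) : temperedHarmonic (2 ^ k) = 12 * k := by
  rw [temperedHarmonic, ← pow_mul, show 8 = 2 ^ 3 by rfl, ← pow_add, Nat.log_pow one_lt_two]
  omega

theorem add_one_pow_sixty_lt (n : ℕ) (hn : 17 ≤ n) : (n + 1) ^ 60 < 32 * n ^ 60 := by
  have h : 17 ^ 60 * (n + 1) ^ 60 ≤ 18 ^ 60 * n ^ 60 := by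
    rw [← mul_pow, ← mul_pow]
    exact Nat.pow_le_pow_left (by omega) 60
  have : 0 < n ^ 60 := by positivity
  nlinarith

theorem temperedHarmonic_add_one_le (n : ℕ) (hn : 17 ≤ n) :
    temperedHarmonic (n + 1) ≤ temperedHarmonic n + 1 := by
  have hlt : 8 * (n + 1) ^ 60 < 2 ^ (Nat.log 2 (8 * n ^ 60) + 6) := calc
    8 * (n + 1) ^ 60 < 2 ^ 5 * (8 * n ^ 60) := by linarith [add_one_pow_sixty_lt n hn]
    _ < 2 ^ 5 * 2 ^ (Nat.log 2 (8 * n ^ 60) + 1) := by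
      gcongr
      exact Nat.lt_pow_succ_log_self one_lt_two _
    _ = 2 ^ (Nat.log 2 (8 * n ^ 60) + 6) := by ring
  have := Nat.log_lt_of_lt_pow (by positivity) hlt
  unfold temperedHarmonic
  omega

theorem Nat.exists_eq_of_map_add_one_le {f : ℕ → ℕ} {a b m : ℕ}
    (hf : ∀ k, a ≤ k → f (k + 1) ≤ f k + 1) (hab : a ≤ b) (ham : f a ≤ m) (hmb : m ≤ f b) :
    ∃ k, a ≤ k ∧ k ≤ b ∧ f k = m := by
  induction b, hab using Nat.le_induction with
  | base => exact ⟨a, le_rfl, le_rfl, le_antisymm ham hmb⟩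
  | succ b hab ih =>
    by_cases hmb' : m ≤ f b
    · obtain ⟨k, hak, hkb, hk⟩ := ih hmb'
      exact ⟨k, hak, hkb.trans b.le_succ, hk⟩
    · exact ⟨b + 1, hab.trans b.le_succ, le_rfl, by linarith [hf b hab]⟩

theorem image_temperedHarmonic_Ici : temperedHarmonic '' Set.Ici 17 = Set.Ici 49 := by
  have h17 : temperedHarmonic 17 = 49 := by decide
  ext m
  constructor
  · rintro ⟨n, hn, rfl⟩
    exact h17 ▸ temperedHarmonic_mono hn
  · intro hm
    have h2m : 17 ≤ 2 ^ m := by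
      have := m.lt_two_pow_self
      simp only [Set.mem_Ici] at hm
      omega
    obtain ⟨k, hk, -, rfl⟩ := Nat.exists_eq_of_map_add_one_le temperedHarmonic_add_one_le h2m
      (h17 ▸ hm) (by rw [temperedHarmonic_two_pow]; omega)
    exact ⟨k, hk, rfl⟩

theorem image_temperedHarmonic_Ico :
    temperedHarmonic '' Set.Ico 1 17 =
      {0, 12, 19, 24, 28, 31, 34, 36, 38, 40, 42, 43, 45, 46, 47, 48} := by
  have : (Finset.Ico 1 17).image temperedHarmonic =
      {0, 12, 19, 24, 28, 31, 34, 36, 38, 40, 42, 43, 45, 46, 47, 48} := by decide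
  simpa using congrArg (fun s : Finset ℕ => (s : Set ℕ)) this

/-- The well-tempered harmonic semigroup `H` is the image of the logarithmic monoid under
the map `x ↦ ⌊12x + 0.6⌋`. -/
theorem well_tempered_harmonic_semigroup_eq_floor_log_image :
    ({0, 12, 19, 24, 28, 31, 34, 36, 38, 40, 42, 43, 45, 46, 47, 48} ∪
        {n : ℕ | n > 48} : Set ℕ) =
      {m : ℕ | ∃ n : ℕ, 1 ≤ n ∧ (m : ℤ) = ⌊12 * Real.logb 2 n + 0.6⌋} := by
  calc _ = temperedHarmonic '' (Set.Ico 1 17 ∪ Set.Ici 17) := by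
        rw [Set.image_union, image_temperedHarmonic_Ico, image_temperedHarmonic_Ici]
        rfl
    _ = {m : ℕ | ∃ n : ℕ, 1 ≤ n ∧ (m : ℤ) = ⌊12 * Real.logb 2 n + 0.6⌋} := by
        ext m
        simp [Set.Ico_union_Ici_eq_Ici, floor_twelve_mul_logb_two_add, eq_comm]
end
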